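/- arXiv:2207.13023 — 3 statements merged into one kernel-verified Lean document; each statement's English description precedes it below -/
import Mathlib

section
/- Every connected fractal k-cube K of order n possessing the one-point intersection property is a continuum of bounded turning: there exists a constant c ≥ 1 such that for any two points x, y ∈ K there is a compact connected subset of K containing x and y whose diameter is at most c·‖x − y‖. -/
open Pointwise

/-- `ℝ^k` as Euclidean space. -/
abbrev E (k : ℕ) := EuclideanSpace ℝ (Fin k)

/-- `D` is a digit set: `D ⊆ {0, …, n−1}^k`. -/
def IsDigitSet (n k : ℕ) (D : Set (E k)) : Prop :=
  ∀ d ∈ D, ∀ i : Fin k, ∃ m : ℕ, m < n ∧ d i = m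

/-- Auxiliary: the digit sums at level `m` (positions of level-`m` pieces, in units `n^{-m}`). -/
def fcSums (n : ℕ) {k : ℕ} (D : Set (E k)) : ℕ → Set (E k)
  | 0 => {0}
  | m + 1 => {c | ∃ a ∈ fcSums n D m, ∃ d ∈ D, c = a + (n : ℝ) ^ m • d}

section Aux

variable {n k : ℕ} {D : Set (E k)} {K : Set (E k)}

lemma fcCoordLeDist (x y : E k) (i : Fin k) : |x i - y i| ≤ dist x y := by
  rw [EuclideanSpace.dist_eq, ← Real.dist_eq]
  have h1 : dist (x i) (y i) ^ 2 ≤ ∑ j, dist (x j) (y j) ^ 2 :=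
    Finset.single_le_sum (f := fun j => dist (x j) (y j) ^ 2)
      (fun j _ => sq_nonneg _) (Finset.mem_univ i)
  calc dist (x i) (y i) = Real.sqrt (dist (x i) (y i) ^ 2) := by
        rw [Real.sqrt_sq dist_nonneg]
    _ ≤ _ := Real.sqrt_le_sqrt h1

lemma fcSums_int (hD : IsDigitSet n k D) :
    ∀ m, ∀ a ∈ fcSums n D m, ∀ i : Fin k, ∃ N : ℕ, a i = N := by
  intro m
  induction m with
  | zero =>
    intro a ha i
    simp only [fcSums, Set.mem_singleton_iff] at ha
    exact ⟨0, by simp [ha]⟩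
  | succ m ih =>
    rintro a ⟨b, hb, d, hd, rfl⟩ i
    obtain ⟨N, hN⟩ := ih b hb i
    obtain ⟨M, _, hM⟩ := hD d hd i
    refine ⟨N + n ^ m * M, ?_⟩
    have : (b + (n : ℝ) ^ m • d) i = b i + (n : ℝ) ^ m * d i := by
      simp [PiLp.add_apply, PiLp.smul_apply, smul_eq_mul]
    rw [this, hN, hM]
    push_cast
    ring

lemma fcCover (hfc : (n : ℝ) • K = K + D) (hn : 2 ≤ n) :
    ∀ m, ∀ x ∈ K, ∃ a ∈ fcSums n D m, ∃ z ∈ K, x = ((n : ℝ) ^ m)⁻¹ • (z + a) := by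
  have hn0 : (n : ℝ) ≠ 0 := by positivity
  intro m
  induction m with
  | zero =>
    intro x hx
    exact ⟨0, rfl, x, hx, by simp⟩
  | succ m ih =>
    intro x hx
    have hmem : (n : ℝ) • x ∈ K + D := by
      rw [← hfc]; exact Set.smul_mem_smul_set hx
    obtain ⟨y, hy, d, hd, hyd⟩ := hmem
    obtain ⟨a, ha, z, hz, hza⟩ := ih y hy
    refine ⟨a + (n : ℝ) ^ m • d, ⟨a, ha, d, hd, rfl⟩, z, hz, ?_⟩
    have hyd' : y + d = (n : ℝ) • x := hyd
    have hx' : x = (n : ℝ)⁻¹ • (y + d) := by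
      rw [hyd', smul_smul, inv_mul_cancel₀ hn0, one_smul]
    rw [hx', hza, pow_succ]
    have hnm0 : (n : ℝ) ^ m ≠ 0 := by positivity
    match_scalars <;> field_simp <;> ring

lemma fcPieceSub (hfc : (n : ℝ) • K = K + D) (hn : 2 ≤ n) :
    ∀ m, ∀ a ∈ fcSums n D m, ∀ z ∈ K, ((n : ℝ) ^ m)⁻¹ • (z + a) ∈ K := by
  have hn0 : (n : ℝ) ≠ 0 := by positivity
  intro m
  induction m with
  | zero =>
    intro a ha z hz
    simp only [fcSums, Set.mem_singleton_iff] at ha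
    simpa [ha] using hz
  | succ m ih =>
    rintro a ⟨b, hb, d, hd, rfl⟩ z hz
    have hy : ((n : ℝ) ^ m)⁻¹ • (z + b) ∈ K := ih b hb z hz
    set y := ((n : ℝ) ^ m)⁻¹ • (z + b) with hydef
    have hmem : y + d ∈ (n : ℝ) • K := by
      rw [hfc]; exact Set.add_mem_add hy hd
    obtain ⟨w, hw, hwd⟩ := hmem
    have hweq : w = (n : ℝ)⁻¹ • (y + d) := by
      rw [← hwd, smul_smul, inv_mul_cancel₀ hn0, one_smul]
    have : ((n : ℝ) ^ (m + 1))⁻¹ • (z + (b + (n : ℝ) ^ m • d)) = (n : ℝ)⁻¹ • (y + d) := by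
      rw [hydef, pow_succ]
      have hnm0 : (n : ℝ) ^ m ≠ 0 := by positivity
      match_scalars <;> field_simp <;> ring
    rw [this, ← hweq]
    exact hw

lemma fcBounds (hD : IsDigitSet n k D) (hfc : (n : ℝ) • K = K + D) (hn : 2 ≤ n)
    (hne : K.Nonempty) (hcomp : IsCompact K) :
    ∀ x ∈ K, ∀ i : Fin k, 0 ≤ x i ∧ x i ≤ 1 := by
  have hn2 : (2 : ℝ) ≤ (n : ℝ) := by exact_mod_cast hn
  intro x hx i
  have hconti : Continuous fun z : E k => z i := (EuclideanSpace.proj i).continuous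
  constructor
  · obtain ⟨x1, hx1K, hx1min⟩ := hcomp.exists_isMinOn hne hconti.continuousOn
    have key : 0 ≤ x1 i := by
      have hmem : (n : ℝ) • x1 ∈ K + D := by rw [← hfc]; exact Set.smul_mem_smul_set hx1K
      obtain ⟨z, hz, d, hd, hzd⟩ := hmem
      have hzd' : z + d = (n : ℝ) • x1 := hzd
      have h1 : (n : ℝ) * x1 i = z i + d i := by
        have := congrArg (fun u : E k => u i) hzd'
        simpa [PiLp.add_apply, PiLp.smul_apply, smul_eq_mul] using this.symm
      obtain ⟨M, _, hM⟩ := hD d hd i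
      have hz1 : x1 i ≤ z i := hx1min hz
      have hd0 : (0 : ℝ) ≤ d i := by rw [hM]; positivity
      nlinarith
    exact key.trans (hx1min hx)
  · obtain ⟨x0, hx0K, hx0max⟩ := hcomp.exists_isMaxOn hne hconti.continuousOn
    have key : x0 i ≤ 1 := by
      have hmem : (n : ℝ) • x0 ∈ K + D := by rw [← hfc]; exact Set.smul_mem_smul_set hx0K
      obtain ⟨z, hz, d, hd, hzd⟩ := hmem
      have hzd' : z + d = (n : ℝ) • x0 := hzd
      have h1 : (n : ℝ) * x0 i = z i + d i := by
        have := congrArg (fun u : E k => u i) hzd'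
        simpa [PiLp.add_apply, PiLp.smul_apply, smul_eq_mul] using this.symm
      obtain ⟨M, hMn, hM⟩ := hD d hd i
      have hz1 : z i ≤ x0 i := hx0max hz
      have hd1 : d i ≤ (n : ℝ) - 1 := by
        rw [hM]
        have : (M : ℝ) + 1 ≤ n := by exact_mod_cast Nat.succ_le_of_lt hMn
        linarith
      nlinarith
    exact (hx0max hx).trans key

lemma fcSepOne (hne : K.Nonempty) (hcomp : IsCompact K) (v : E k)
    (hdisj : K ∩ (K + ({v} : Set (E k))) = ∅) :
    ∃ ε : ℝ, 0 < ε ∧ ∀ z ∈ K, ∀ w ∈ K, ε ≤ dist z (w + v) := by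
  have hKv : IsCompact (K + ({v} : Set (E k))) := hcomp.add isCompact_singleton
  have hKvne : (K + ({v} : Set (E k))).Nonempty := hne.add (Set.singleton_nonempty v)
  have hcont : Continuous fun z : E k => Metric.infDist z (K + ({v} : Set (E k))) :=
    Metric.continuous_infDist_pt _
  obtain ⟨z0, hz0K, hz0min⟩ := hcomp.exists_isMinOn hne hcont.continuousOn
  refine ⟨Metric.infDist z0 (K + ({v} : Set (E k))), ?_, ?_⟩
  · rcases lt_or_eq_of_le (Metric.infDist_nonneg (x := z0) (s := K + ({v} : Set (E k)))) with h | h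
    · exact h
    · exfalso
      have : z0 ∈ K + ({v} : Set (E k)) :=
        (hKv.isClosed.mem_iff_infDist_zero hKvne).2 h.symm
      rw [Set.eq_empty_iff_forall_notMem] at hdisj
      exact hdisj z0 ⟨hz0K, this⟩
  · intro z hz w hw
    have h1 : Metric.infDist z0 _ ≤ Metric.infDist z (K + ({v} : Set (E k))) := hz0min hz
    have h2 : Metric.infDist z (K + ({v} : Set (E k))) ≤ dist z (w + v) :=
      Metric.infDist_le_dist_of_mem (Set.add_mem_add hw rfl)
    exact h1.trans h2

lemma fcSep (hne : K.Nonempty) (hcomp : IsCompact K) :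
    ∃ δ : ℝ, 0 < δ ∧ δ ≤ 1 ∧ ∀ v : E k, (∀ i, v i = -1 ∨ v i = 0 ∨ v i = 1) →
      K ∩ (K + ({v} : Set (E k))) = ∅ → ∀ z ∈ K, ∀ w ∈ K, δ ≤ dist z (w + v) := by
  have hSfin : {v : E k | ∀ i, v i = -1 ∨ v i = 0 ∨ v i = 1}.Finite := by
    have : {v : E k | ∀ i, v i = -1 ∨ v i = 0 ∨ v i = 1} ⊆
        WithLp.ofLp ⁻¹' Set.pi Set.univ (fun _ : Fin k => ({-1, 0, 1} : Set ℝ)) := by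
      intro v hv i _
      rcases hv i with h | h | h <;> simp [h]
    exact (Set.Finite.preimage (WithLp.ofLp_injective 2).injOn
      (Set.Finite.pi (fun _ => (Set.toFinite _)))).subset this
  have main : ∀ T : Set (E k), T.Finite → ∃ δ : ℝ, 0 < δ ∧ δ ≤ 1 ∧ ∀ v ∈ T,
      K ∩ (K + ({v} : Set (E k))) = ∅ → ∀ z ∈ K, ∀ w ∈ K, δ ≤ dist z (w + v) := by
    intro T hT
    refine Set.Finite.induction_on (motive := fun T _ => ∃ δ : ℝ, 0 < δ ∧ δ ≤ 1 ∧ ∀ v ∈ T,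
      K ∩ (K + ({v} : Set (E k))) = ∅ → ∀ z ∈ K, ∀ w ∈ K, δ ≤ dist z (w + v)) T hT
      ⟨1, one_pos, le_refl 1, by simp⟩ ?_
    rintro v T hvT hTfin ih
    obtain ⟨δ, hδ0, hδ1, hδ⟩ := ih
    by_cases hdisj : K ∩ (K + ({v} : Set (E k))) = ∅
    · obtain ⟨ε, hε0, hε⟩ := fcSepOne hne hcomp v hdisj
      refine ⟨min δ ε, lt_min hδ0 hε0, (min_le_left _ _).trans hδ1, ?_⟩
      intro u hu hud z hz w hw
      rcases Set.mem_insert_iff.1 hu with rfl | hu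
      · exact (min_le_right _ _).trans (hε z hz w hw)
      · exact (min_le_left _ _).trans (hδ u hu hud z hz w hw)
    · refine ⟨δ, hδ0, hδ1, ?_⟩
      intro u hu hud z hz w hw
      rcases Set.mem_insert_iff.1 hu with rfl | hu
      · exact absurd hud hdisj
      · exact hδ u hu hud z hz w hw
  obtain ⟨δ, h0, h1, h⟩ := main _ hSfin
  exact ⟨δ, h0, h1, fun v hv => h v hv⟩

end Aux

set_option maxHeartbeats 1000000

/-- Every connected fractal `k`-cube possessing the one-point intersection property is a
continuum of bounded turning: there is `c ≥ 1` such that any two points `x, y ∈ K` are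
contained in a compact connected subset of `K` of diameter at most `c · ‖x − y‖`. -/
theorem fractal_cube_bounded_turning (n k : ℕ) (hn : 2 ≤ n)
    (D : Set (E k)) (hD : IsDigitSet n k D)
    (K : Set (E k)) (hne : K.Nonempty) (hcomp : IsCompact K)
    (hfc : (n : ℝ) • K = K + D)
    (hconn : IsConnected K)
    (hopi : ∀ di ∈ D, ∀ dj ∈ D, di ≠ dj →
      (((n : ℝ)⁻¹ • (K + {di})) ∩ ((n : ℝ)⁻¹ • (K + {dj}))).Subsingleton) :
    ∃ c : ℝ, 1 ≤ c ∧ ∀ x ∈ K, ∀ y ∈ K, ∃ A : Set (E k),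
      A ⊆ K ∧ IsCompact A ∧ IsConnected A ∧ x ∈ A ∧ y ∈ A ∧
        Metric.diam A ≤ c * ‖x - y‖ := by
  classical
  have hn2 : (2 : ℝ) ≤ (n : ℝ) := by exact_mod_cast hn
  have hn0 : (n : ℝ) ≠ 0 := by positivity
  have hnpos : (0 : ℝ) < n := by positivity
  set s : ℝ := Real.sqrt k with hs
  have hs0 : 0 ≤ s := Real.sqrt_nonneg _
  have hbounds := fcBounds hD hfc hn hne hcomp
  -- distance bound inside K
  have hdistK : ∀ z ∈ K, ∀ w ∈ K, dist z w ≤ s := by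
    intro z hz w hw
    rw [EuclideanSpace.dist_eq]
    have hsum : (∑ i, dist (z i) (w i) ^ 2) ≤ (k : ℝ) := by
      calc (∑ i, dist (z i) (w i) ^ 2) ≤ ∑ _i : Fin k, (1 : ℝ) := by
            refine Finset.sum_le_sum fun i _ => ?_
            have h1 := hbounds z hz i
            have h2 := hbounds w hw i
            rw [Real.dist_eq]
            nlinarith [abs_nonneg (z i - w i), sq_abs (z i - w i)]
        _ = (k : ℝ) := by simp
    calc Real.sqrt (∑ i, dist (z i) (w i) ^ 2) ≤ Real.sqrt k := Real.sqrt_le_sqrt hsum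
      _ = s := rfl
  obtain ⟨δ, hδ0, hδ1, hδsep⟩ := fcSep (K := K) hne hcomp
  refine ⟨max 1 (2 * s * n / δ), le_max_left _ _, ?_⟩
  set c : ℝ := max 1 (2 * s * n / δ) with hc
  have hcsn : 2 * s * n / δ ≤ c := le_max_right _ _
  have hc0 : 0 < c := lt_of_lt_of_le one_pos (le_max_left _ _)
  intro x hx y hy
  rcases eq_or_ne x y with rfl | hxy
  · refine ⟨{x}, Set.singleton_subset_iff.2 hx, isCompact_singleton,
      isConnected_singleton, rfl, rfl, ?_⟩
    simp [Metric.diam_singleton]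
  set r : ℝ := dist x y with hr
  have hrnorm : ‖x - y‖ = r := (dist_eq_norm x y).symm
  have hr0 : 0 < r := dist_pos.2 hxy
  rw [hrnorm]
  by_cases hbig : δ ≤ r
  · -- take A = K
    refine ⟨K, le_refl _, hcomp, hconn, hx, hy, ?_⟩
    have hcr : s ≤ c * r := by
      have h1 : 2 * s * n / δ * δ ≤ c * r := by
        apply mul_le_mul hcsn hbig hδ0.le hc0.le
      have h2 : 2 * s * n / δ * δ = 2 * s * n := by field_simp
      nlinarith
    refine Metric.diam_le_of_forall_dist_le (le_trans hs0 hcr) fun z hz w hw => ?_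
    exact (hdistK z hz w hw).trans hcr
  push_neg at hbig
  -- choose the level m
  have hinv1 : (n : ℝ)⁻¹ < 1 := by
    rw [inv_lt_one_iff₀]; right; linarith
  have hinv0 : (0 : ℝ) < (n : ℝ)⁻¹ := by positivity
  obtain ⟨M, hM⟩ := exists_pow_lt_of_lt_one (div_pos hr0 hδ0) hinv1
  have hex : ∃ m : ℕ, δ * ((n : ℝ) ^ m)⁻¹ ≤ r := by
    refine ⟨M, ?_⟩
    have : ((n : ℝ)⁻¹) ^ M < r / δ := hM
    rw [inv_pow] at this
    calc δ * ((n : ℝ) ^ M)⁻¹ ≤ δ * (r / δ) := by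
          apply mul_le_mul_of_nonneg_left this.le hδ0.le
      _ = r := by field_simp
  have hfind0 : Nat.find hex ≠ 0 := by
    intro h0
    have := Nat.find_spec hex
    rw [h0] at this
    simp at this
    linarith
  set m : ℕ := Nat.find hex - 1 with hmdef
  have hmsucc : m + 1 = Nat.find hex := by omega
  have hup : δ * ((n : ℝ) ^ (m + 1))⁻¹ ≤ r := by
    rw [hmsucc]; exact Nat.find_spec hex
  have hlow : r < δ * ((n : ℝ) ^ m)⁻¹ := by
    have := Nat.find_min hex (m := m) (by omega)
    linarith [not_le.1 this]
  have hnm0 : (0 : ℝ) < (n : ℝ) ^ m := by positivity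
  -- pieces containing x and y
  obtain ⟨a, ha, z, hz, hxz⟩ := fcCover hfc hn m x hx
  obtain ⟨b, hb, w, hw, hyw⟩ := fcCover hfc hn m y hy
  set gP : E k → E k := fun u => ((n : ℝ) ^ m)⁻¹ • (u + a) with hgP
  set gQ : E k → E k := fun u => ((n : ℝ) ^ m)⁻¹ • (u + b) with hgQ
  have hgPcont : Continuous gP := by rw [hgP]; fun_prop
  have hgQcont : Continuous gQ := by rw [hgQ]; fun_prop
  set P : Set (E k) := gP '' K with hP
  set Q : Set (E k) := gQ '' K with hQ
  have hPK : P ⊆ K := by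
    rintro _ ⟨u, hu, rfl⟩; exact fcPieceSub hfc hn m a ha u hu
  have hQK : Q ⊆ K := by
    rintro _ ⟨u, hu, rfl⟩; exact fcPieceSub hfc hn m b hb u hu
  have hxP : x ∈ P := ⟨z, hz, hxz.symm⟩
  have hyQ : y ∈ Q := ⟨w, hw, hyw.symm⟩
  -- coordinates differences are in {-1,0,1}
  have hsmall : ∀ i : Fin k, (b - a) i = -1 ∨ (b - a) i = 0 ∨ (b - a) i = 1 := by
    intro i
    obtain ⟨N, hN⟩ := fcSums_int hD m a ha i
    obtain ⟨Mb, hMb⟩ := fcSums_int hD m b hb i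
    have hcoord : x i - y i = ((n : ℝ) ^ m)⁻¹ * ((z i + a i) - (w i + b i)) := by
      rw [hxz, hyw]
      simp [PiLp.smul_apply, PiLp.add_apply, smul_eq_mul]
      ring
    have hzb := hbounds z hz i
    have hwb := hbounds w hw i
    have hdiffsmall : |(Mb : ℝ) - N| ≤ 1 := by
      by_contra hgt
      push_neg at hgt
      -- then |x i - y i| ≥ (n^m)⁻¹
      have hub : ((n : ℝ) ^ m)⁻¹ ≤ |x i - y i| := by
        rw [hcoord, abs_mul, abs_of_pos (inv_pos.2 hnm0)]
        have hzabs : (1 : ℤ) < |(Mb : ℤ) - (N : ℤ)| := by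
          have : (1 : ℝ) < |(((Mb : ℤ) - (N : ℤ) : ℤ) : ℝ)| := by push_cast; exact hgt
          exact_mod_cast this
        have hint2 : (2 : ℝ) ≤ |(Mb : ℝ) - N| := by
          have h2z : (2 : ℤ) ≤ |(Mb : ℤ) - (N : ℤ)| := hzabs
          have : ((2 : ℤ) : ℝ) ≤ ((|(Mb : ℤ) - (N : ℤ)| : ℤ) : ℝ) := by exact_mod_cast h2z
          push_cast at this
          convert this using 2
        have h1 : |(z i + a i) - (w i + b i)| ≥ 1 := by
          rw [hN, hMb]
          have h2a := abs_sub_abs_le_abs_sub ((Mb : ℝ) - (N : ℝ)) (z i - w i)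
          have h2b : |((Mb : ℝ) - N) - (z i - w i)| = |(z i - w i) - ((Mb : ℝ) - N)| :=
            abs_sub_comm _ _
          have h3 : |z i - w i| ≤ 1 := by
            rw [abs_le]; constructor <;> nlinarith [hzb.1, hzb.2, hwb.1, hwb.2]
          have h4 : (z i + (N : ℝ)) - (w i + (Mb : ℝ)) = (z i - w i) - ((Mb : ℝ) - N) := by ring
          rw [h4]
          linarith
        nlinarith [inv_pos.2 hnm0, h1]
      have hlt : |x i - y i| ≤ r := fcCoordLeDist x y i
      have : r < ((n : ℝ) ^ m)⁻¹ := by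
        calc r < δ * ((n : ℝ) ^ m)⁻¹ := hlow
          _ ≤ 1 * ((n : ℝ) ^ m)⁻¹ := by
              apply mul_le_mul_of_nonneg_right hδ1 (inv_pos.2 hnm0).le
          _ = ((n : ℝ) ^ m)⁻¹ := one_mul _
      linarith
    have hba : (b - a) i = (Mb : ℝ) - N := by
      simp [PiLp.sub_apply, hN, hMb]
    have hint : ((Mb : ℤ) - N = -1) ∨ ((Mb : ℤ) - N = 0) ∨ ((Mb : ℤ) - N = 1) := by
      have : |(Mb : ℤ) - N| ≤ 1 := by
        have hcast : |((Mb : ℤ) - N : ℤ)| ≤ (1 : ℤ) ↔ |((Mb : ℝ) - N)| ≤ 1 := by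
          rw [← Int.cast_natCast (R := ℝ) Mb, ← Int.cast_natCast (R := ℝ) N, ← Int.cast_sub,
            ← Int.cast_abs, ← Int.cast_one (R := ℝ), Int.cast_le]
        exact hcast.2 hdiffsmall
      have := abs_le.1 this
      omega
    rw [hba]
    rcases hint with h | h | h
    · left; have h' := congrArg (Int.cast (R := ℝ)) h; push_cast at h'; exact h'
    · right; left; exact_mod_cast h
    · right; right; exact_mod_cast h
  set v : E k := b - a with hv
  -- dist relation
  have hgpz : gP z = x := by simp only [hgP]; exact hxz.symm
  have hgqw : gQ w = y := by simp only [hgQ]; exact hyw.symm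
  have hdistrel : r = ((n : ℝ) ^ m)⁻¹ * dist z (w + v) := by
    have h1 : w + b = (w + v) + a := by rw [hv]; abel
    calc r = dist (gP z) (gQ w) := by rw [hgpz, hgqw]
      _ = ‖((n : ℝ) ^ m)⁻¹‖ * dist (z + a) (w + b) := dist_smul₀ _ _ _
      _ = ((n : ℝ) ^ m)⁻¹ * dist (z + a) (w + b) := by
          rw [Real.norm_eq_abs, abs_of_pos (inv_pos.2 hnm0)]
      _ = ((n : ℝ) ^ m)⁻¹ * dist z (w + v) := by rw [h1, dist_add_right]
  -- pieces intersect
  have hinter : (P ∩ Q).Nonempty := by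
    by_cases hvdisj : K ∩ (K + ({v} : Set (E k))) = ∅
    · exfalso
      have hsep := hδsep v hsmall hvdisj z hz w hw
      have : δ * ((n : ℝ) ^ m)⁻¹ ≤ r := by
        rw [hdistrel]
        calc δ * ((n : ℝ) ^ m)⁻¹ = ((n : ℝ) ^ m)⁻¹ * δ := by ring
          _ ≤ ((n : ℝ) ^ m)⁻¹ * dist z (w + v) := by
              apply mul_le_mul_of_nonneg_left hsep (inv_pos.2 hnm0).le
      linarith
    · obtain ⟨p, hpK, hpKv⟩ := Set.nonempty_iff_ne_empty.2 hvdisj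
      obtain ⟨q, hq, v', hv', hqv⟩ := hpKv
      rw [Set.mem_singleton_iff] at hv'
      subst hv'
      refine ⟨gP p, ⟨p, hpK, rfl⟩, q, hq, ?_⟩
      have hpa : q + b = p + a := by
        rw [← hqv, hv]; show q + b = q + (b - a) + a; rw [add_assoc, sub_add_cancel]
      show gQ q = gP p
      simp only [hgP, hgQ]
      rw [hpa]
  -- the set A
  refine ⟨P ∪ Q, Set.union_subset hPK hQK,
    (hcomp.image hgPcont).union (hcomp.image hgQcont),
    ?_, Or.inl hxP, Or.inr hyQ, ?_⟩
  · exact IsConnected.union hinter (hconn.image gP hgPcont.continuousOn)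
      (hconn.image gQ hgQcont.continuousOn)
  · -- diameter bound
    have hdiamP : Metric.diam P ≤ ((n : ℝ) ^ m)⁻¹ * s := by
      refine Metric.diam_le_of_forall_dist_le (by positivity) ?_
      rintro _ ⟨u1, hu1, rfl⟩ _ ⟨u2, hu2, rfl⟩
      calc dist (gP u1) (gP u2) = ‖((n : ℝ) ^ m)⁻¹‖ * dist (u1 + a) (u2 + a) := dist_smul₀ _ _ _
        _ = ((n : ℝ) ^ m)⁻¹ * dist u1 u2 := by
            rw [Real.norm_eq_abs, abs_of_pos (inv_pos.2 hnm0), dist_add_right]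
        _ ≤ ((n : ℝ) ^ m)⁻¹ * s := by
            apply mul_le_mul_of_nonneg_left (hdistK u1 hu1 u2 hu2) (inv_pos.2 hnm0).le
    have hdiamQ : Metric.diam Q ≤ ((n : ℝ) ^ m)⁻¹ * s := by
      refine Metric.diam_le_of_forall_dist_le (by positivity) ?_
      rintro _ ⟨u1, hu1, rfl⟩ _ ⟨u2, hu2, rfl⟩
      calc dist (gQ u1) (gQ u2) = ‖((n : ℝ) ^ m)⁻¹‖ * dist (u1 + b) (u2 + b) := dist_smul₀ _ _ _
        _ = ((n : ℝ) ^ m)⁻¹ * dist u1 u2 := by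
            rw [Real.norm_eq_abs, abs_of_pos (inv_pos.2 hnm0), dist_add_right]
        _ ≤ ((n : ℝ) ^ m)⁻¹ * s := by
            apply mul_le_mul_of_nonneg_left (hdistK u1 hu1 u2 hu2) (inv_pos.2 hnm0).le
    have hdiam : Metric.diam (P ∪ Q) ≤ 2 * (((n : ℝ) ^ m)⁻¹ * s) := by
      calc Metric.diam (P ∪ Q) ≤ Metric.diam P + Metric.diam Q := Metric.diam_union' hinter
        _ ≤ 2 * (((n : ℝ) ^ m)⁻¹ * s) := by linarith
    -- (n^m)⁻¹ ≤ n * r / δ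
    have hscale : ((n : ℝ) ^ m)⁻¹ ≤ n * r / δ := by
      have h1 : ((n : ℝ) ^ (m + 1))⁻¹ ≤ r / δ := by
        rw [le_div_iff₀ hδ0]
        linarith
      have h2 : ((n : ℝ) ^ m)⁻¹ = n * ((n : ℝ) ^ (m + 1))⁻¹ := by
        rw [pow_succ]
        field_simp
      rw [h2]
      calc (n : ℝ) * ((n : ℝ) ^ (m + 1))⁻¹ ≤ (n : ℝ) * (r / δ) := by
            apply mul_le_mul_of_nonneg_left h1 hnpos.le
        _ = n * r / δ := by ring
    calc Metric.diam (P ∪ Q) ≤ 2 * (((n : ℝ) ^ m)⁻¹ * s) := hdiam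
      _ ≤ 2 * ((n * r / δ) * s) := by nlinarith [hs0]
      _ = (2 * s * n / δ) * r := by ring
      _ ≤ c * r := by apply mul_le_mul_of_nonneg_right hcsn hr0.le
end

section
/- The fractal 3-cube of order 3 with digit set D = {(0,1,1), (1,0,1), (1,1,0), (1,1,1), (1,1,2), (1,2,1), (2,1,1)} (the unique nonempty compact K ⊆ ℝ³ with 3·K = K + D) is a dendrite. -/
open Pointwise

/-- `ℝ³` as Euclidean space. -/
abbrev E3 := EuclideanSpace ℝ (Fin 3)

/-- The vector `(a, b, c) ∈ ℝ³`. -/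
noncomputable def v3 (a b c : ℝ) : E3 := (WithLp.equiv 2 (Fin 3 → ℝ)).symm ![a, b, c]

open Set Metric

noncomputable def fm (d : E3) (x : E3) : E3 := (3:ℝ)⁻¹ • (x + d)

noncomputable def armd (i : Fin 3) (s : Bool) : E3 :=
  (WithLp.equiv 2 (Fin 3 → ℝ)).symm (fun j => if j = i then (if s then 2 else 0) else 1)

noncomputable def ctr : E3 := (WithLp.equiv 2 (Fin 3 → ℝ)).symm (fun _ => 1)

noncomputable def bd (i : Fin 3) (s : Bool) : E3 :=
  (WithLp.equiv 2 (Fin 3 → ℝ)).symm (fun j => if j = i then (if s then 1 else 0) else 2⁻¹)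

noncomputable def jn (i : Fin 3) (s : Bool) : E3 := fm ctr (bd i s)

noncomputable def Dset : Set E3 :=
  {v3 0 1 1, v3 1 0 1, v3 1 1 0, v3 1 1 1, v3 1 1 2, v3 1 2 1, v3 2 1 1}

lemma fm_apply (d x : E3) (i : Fin 3) : fm d x i = (x i + d i) / 3 := by
  show (3:ℝ)⁻¹ * (x i + d i) = _; ring

lemma armd_apply (i : Fin 3) (s : Bool) (j : Fin 3) :
    armd i s j = if j = i then (if s then 2 else 0) else 1 := rfl

lemma ctr_apply (j : Fin 3) : ctr j = 1 := rfl

lemma bd_apply (i : Fin 3) (s : Bool) (j : Fin 3) :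
    bd i s j = if j = i then (if s then 1 else 0) else 2⁻¹ := rfl

lemma v3_apply0 (a b c : ℝ) : v3 a b c 0 = a := rfl
lemma v3_apply1 (a b c : ℝ) : v3 a b c 1 = b := rfl
lemma v3_apply2 (a b c : ℝ) : v3 a b c 2 = c := rfl

lemma e3_ext {x y : E3} (h : ∀ i, x i = y i) : x = y := WithLp.ofLp_injective 2 (funext h)

lemma ctr_mem_Dset : ctr ∈ Dset := by
  have : ctr = v3 1 1 1 := by
    apply e3_ext; intro i; fin_cases i <;> rfl
  rw [this, Dset]; simp

lemma armd_mem_Dset (i : Fin 3) (s : Bool) : armd i s ∈ Dset := by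
  have e3eq : ∀ (x y : E3), (∀ j, x j = y j) → x = y := fun x y h => WithLp.ofLp_injective 2 (funext h)
  simp only [Dset, mem_insert_iff, mem_singleton_iff]
  fin_cases i <;> cases s
  · exact Or.inl (e3eq _ _ (by intro j; fin_cases j <;> rfl))
  · exact Or.inr (Or.inr (Or.inr (Or.inr (Or.inr (Or.inr (e3eq _ _ (by intro j; fin_cases j <;> rfl)))))))
  · exact Or.inr (Or.inl (e3eq _ _ (by intro j; fin_cases j <;> rfl)))
  · exact Or.inr (Or.inr (Or.inr (Or.inr (Or.inr (Or.inl (e3eq _ _ (by intro j; fin_cases j <;> rfl)))))))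
  · exact Or.inr (Or.inr (Or.inl (e3eq _ _ (by intro j; fin_cases j <;> rfl))))
  · exact Or.inr (Or.inr (Or.inr (Or.inr (Or.inl (e3eq _ _ (by intro j; fin_cases j <;> rfl))))))

-- characterization
lemma Dset_cases {d : E3} (hd : d ∈ Dset) : d = ctr ∨ ∃ i s, d = armd i s := by
  rcases hd with h|h|h|h|h|h|h
  · exact Or.inr ⟨0, false, by subst h; apply e3_ext; intro j; fin_cases j <;> rfl⟩
  · exact Or.inr ⟨1, false, by subst h; apply e3_ext; intro j; fin_cases j <;> rfl⟩
  · exact Or.inr ⟨2, false, by subst h; apply e3_ext; intro j; fin_cases j <;> rfl⟩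
  · exact Or.inl (by subst h; apply e3_ext; intro j; fin_cases j <;> rfl)
  · exact Or.inr ⟨2, true, by subst h; apply e3_ext; intro j; fin_cases j <;> rfl⟩
  · exact Or.inr ⟨1, true, by subst h; apply e3_ext; intro j; fin_cases j <;> rfl⟩
  · exact Or.inr ⟨0, true, by subst h; apply e3_ext; intro j; fin_cases j <;> rfl⟩

lemma Dset_coord_nonneg {d : E3} (hd : d ∈ Dset) (i : Fin 3) : 0 ≤ d i := by
  rcases Dset_cases hd with rfl | ⟨j, s, rfl⟩
  · rw [ctr_apply]; norm_num
  · rw [armd_apply]; split_ifs <;> norm_num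

lemma Dset_coord_le {d : E3} (hd : d ∈ Dset) (i : Fin 3) : d i ≤ 2 := by
  rcases Dset_cases hd with rfl | ⟨j, s, rfl⟩
  · rw [ctr_apply]; norm_num
  · rw [armd_apply]; split_ifs <;> norm_num

lemma dig0 {d : E3} (hd : d ∈ Dset) {i : Fin 3} (h : d i = 0) : d = armd i false := by
  rcases Dset_cases hd with rfl | ⟨j, s, rfl⟩
  · rw [ctr_apply] at h; norm_num at h
  · rw [armd_apply] at h
    by_cases hij : i = j
    · subst hij
      rw [if_pos rfl] at h
      cases s
      · rfl
      · norm_num at h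
    · rw [if_neg hij] at h; norm_num at h

lemma dig2 {d : E3} (hd : d ∈ Dset) {i : Fin 3} (h : d i = 2) : d = armd i true := by
  rcases Dset_cases hd with rfl | ⟨j, s, rfl⟩
  · rw [ctr_apply] at h; norm_num at h
  · rw [armd_apply] at h
    by_cases hij : i = j
    · subst hij
      rw [if_pos rfl] at h
      cases s
      · norm_num at h
      · rfl
    · rw [if_neg hij] at h; norm_num at h

lemma fm_dist (d x y : E3) : dist (fm d x) (fm d y) = 3⁻¹ * dist x y := by
  rw [fm, fm, dist_smul₀, dist_add_right]
  norm_num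

lemma fm_inj (d : E3) : Function.Injective (fm d) := by
  intro a b h
  have h2 : a + d = b + d := smul_right_injective E3 (by norm_num : (3:ℝ)⁻¹ ≠ 0) h
  exact add_right_cancel h2

lemma fm_cont (d : E3) : Continuous (fm d) :=
  by unfold fm; fun_prop

lemma jn_apply (i : Fin 3) (s : Bool) (j : Fin 3) :
    jn i s j = if j = i then (if s then 2/3 else 1/3) else 2⁻¹ := by
  rw [jn, fm_apply, ctr_apply, bd_apply]
  split_ifs <;> norm_num

lemma jn_eq_arm (i : Fin 3) (s : Bool) : jn i s = fm (armd i s) (bd i (!s)) := by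
  cases s <;>
  · apply e3_ext; intro j
    rw [jn_apply, fm_apply, armd_apply, bd_apply]
    by_cases h : j = i <;> simp [h] <;> norm_num

lemma fm_bd (i : Fin 3) (s : Bool) : fm (armd i s) (bd i s) = bd i s := by
  cases s <;>
  · apply e3_ext; intro j
    rw [fm_apply, armd_apply, bd_apply]
    by_cases h : j = i <;> simp [h] <;> norm_num

lemma contract_to_pt {S : Set E3} {d z : E3} (hz : fm d z = z)
    (hSg : ∀ x ∈ S, ∃ y ∈ S, x = fm d y) (hbd : ∀ x ∈ S, dist x z ≤ 2) :
    ∀ x ∈ S, x = z := by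
  have key : ∀ n : ℕ, ∀ x ∈ S, dist x z ≤ 2 * (3⁻¹:ℝ)^n := by
    intro n
    induction n with
    | zero => simpa using hbd
    | succ n ih =>
      intro x hx
      obtain ⟨y, hy, rfl⟩ := hSg x hx
      calc dist (fm d y) z = dist (fm d y) (fm d z) := by rw [hz]
        _ = 3⁻¹ * dist y z := fm_dist d y z
        _ ≤ 3⁻¹ * (2 * (3⁻¹:ℝ)^n) := by
            have := ih y hy
            nlinarith [dist_nonneg (x := y) (y := z)]
        _ = 2 * (3⁻¹:ℝ)^(n+1) := by ring
  intro x hx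
  have h0 : dist x z ≤ 0 := by
    by_contra hc
    push_neg at hc
    obtain ⟨n, hn⟩ := exists_pow_lt_of_lt_one (by linarith : (0:ℝ) < dist x z / 2)
      (by norm_num : (3⁻¹:ℝ) < 1)
    have := key n x hx
    linarith
  exact dist_le_zero.mp h0

/-- Standing hypotheses on the attractor. -/
structure Good (K : Set E3) : Prop where
  ne : K.Nonempty
  comp : IsCompact K
  mem : ∀ x, x ∈ K ↔ ∃ y ∈ K, ∃ d ∈ Dset, x = fm d y

namespace Good

variable {K : Set E3}

lemma fm_mem (h : Good K) {y d : E3} (hy : y ∈ K) (hd : d ∈ Dset) : fm d y ∈ K :=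
  (h.mem _).2 ⟨y, hy, d, hd, rfl⟩

lemma coord_cont (i : Fin 3) : Continuous (fun x : E3 => x i) :=
  (continuous_apply i).comp (PiLp.continuous_ofLp (p := 2) (β := fun _ : Fin 3 => ℝ))

lemma bound01 (h : Good K) : ∀ x ∈ K, ∀ i, 0 ≤ x i ∧ x i ≤ 1 := by
  have hub : ∀ i, ∀ x ∈ K, x i ≤ 1 := by
    intro i
    obtain ⟨z, hzK, hz⟩ := h.comp.exists_isMaxOn h.ne (coord_cont i).continuousOn
    obtain ⟨y, hy, d, hd, hzz⟩ := (h.mem z).1 hzK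
    have hzi : z i = (y i + d i) / 3 := by rw [hzz, fm_apply]
    have h1 : y i ≤ z i := hz hy
    have h2 : d i ≤ 2 := Dset_coord_le hd i
    have hz1 : z i ≤ 1 := by linarith
    intro x hx
    exact le_trans (hz hx) hz1
  have hlb : ∀ i, ∀ x ∈ K, 0 ≤ x i := by
    intro i
    obtain ⟨z, hzK, hz⟩ := h.comp.exists_isMinOn h.ne (coord_cont i).continuousOn
    obtain ⟨y, hy, d, hd, hzz⟩ := (h.mem z).1 hzK
    have hzi : z i = (y i + d i) / 3 := by rw [hzz, fm_apply]
    have h1 : z i ≤ y i := hz hy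
    have h2 : 0 ≤ d i := Dset_coord_nonneg hd i
    have hz1 : 0 ≤ z i := by linarith
    intro x hx
    exact le_trans hz1 (hz hx)
  exact fun x hx i => ⟨hlb i x hx, hub i x hx⟩

lemma distK (h : Good K) {x y : E3} (hx : x ∈ K) (hy : y ∈ K) : dist x y ≤ 2 := by
  have hb := h.bound01
  rw [EuclideanSpace.dist_eq]
  have hsq : ∀ i : Fin 3, dist (x i) (y i) ^ 2 ≤ 1 := by
    intro i
    have h1 := hb x hx i
    have h2 := hb y hy i
    rw [Real.dist_eq]
    have : |x i - y i| ≤ 1 := by rw [abs_le]; constructor <;> linarith [h1.1, h1.2, h2.1, h2.2]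
    nlinarith [abs_nonneg (x i - y i)]
  have hsum : (∑ i, dist (x i) (y i) ^ 2) ≤ 3 := by
    rw [Fin.sum_univ_three]
    linarith [hsq 0, hsq 1, hsq 2]
  calc Real.sqrt (∑ i, dist (x i) (y i) ^ 2) ≤ Real.sqrt 4 :=
        Real.sqrt_le_sqrt (by linarith)
    _ = 2 := by rw [show (4:ℝ) = 2^2 by norm_num, Real.sqrt_sq (by norm_num : (0:ℝ) ≤ 2)]

lemma fix_mem (h : Good K) {d z : E3} (hd : d ∈ Dset) (hz : fm d z = z) : z ∈ K := by
  obtain ⟨x₀, hx₀⟩ := h.ne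
  have hseq : ∀ n : ℕ, (fm d)^[n] x₀ ∈ K ∧
      dist ((fm d)^[n] x₀) z ≤ (3⁻¹:ℝ)^n * dist x₀ z := by
    intro n
    induction n with
    | zero => exact ⟨hx₀, by simp⟩
    | succ n ih =>
      constructor
      · rw [Function.iterate_succ_apply']
        exact h.fm_mem ih.1 hd
      · rw [Function.iterate_succ_apply']
        calc dist (fm d ((fm d)^[n] x₀)) z = dist (fm d ((fm d)^[n] x₀)) (fm d z) := by rw [hz]
          _ = 3⁻¹ * dist ((fm d)^[n] x₀) z := fm_dist _ _ _
          _ ≤ 3⁻¹ * ((3⁻¹:ℝ)^n * dist x₀ z) := by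
              have := ih.2
              nlinarith [dist_nonneg (x := (fm d)^[n] x₀) (y := z)]
          _ = (3⁻¹:ℝ)^(n+1) * dist x₀ z := by ring
  have hcl : z ∈ closure K := by
    rw [Metric.mem_closure_iff]
    intro ε hε
    by_cases hd0 : dist x₀ z = 0
    · exact ⟨x₀, hx₀, by rw [dist_comm, hd0]; exact hε⟩
    · have hdpos : 0 < dist x₀ z := lt_of_le_of_ne dist_nonneg (Ne.symm hd0)
      obtain ⟨n, hn⟩ := exists_pow_lt_of_lt_one (div_pos hε hdpos) (by norm_num : (3⁻¹:ℝ) < 1)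
      refine ⟨(fm d)^[n] x₀, (hseq n).1, ?_⟩
      rw [dist_comm]
      calc dist ((fm d)^[n] x₀) z ≤ (3⁻¹:ℝ)^n * dist x₀ z := (hseq n).2
        _ < (ε / dist x₀ z) * dist x₀ z := by
            apply mul_lt_mul_of_pos_right hn hdpos
        _ = ε := by field_simp
  rwa [h.comp.isClosed.closure_eq] at hcl

lemma bd_mem (h : Good K) (i : Fin 3) (s : Bool) : bd i s ∈ K :=
  h.fix_mem (armd_mem_Dset i s) (fm_bd i s)

lemma face (h : Good K) : ∀ x ∈ K, ∀ (i : Fin 3) (s : Bool),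
    x i = (if s then 1 else 0) → x = bd i s := by
  intro x hxK i s hxi
  have hb := h.bound01
  set S : Set E3 := {x ∈ K | x i = (if s then 1 else 0)} with hS
  have hSg : ∀ x ∈ S, ∃ y ∈ S, x = fm (armd i s) y := by
    rintro w ⟨hwK, hwi⟩
    obtain ⟨y, hy, d, hd, rfl⟩ := (h.mem w).1 hwK
    rw [fm_apply] at hwi
    have hy0 := (hb y hy i).1
    have hy1 := (hb y hy i).2
    have hd0 := Dset_coord_nonneg hd i
    have hd2 := Dset_coord_le hd i
    cases s with
    | false =>
      norm_num at hwi
      have hyi : y i = 0 := by linarith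
      have hdi : d i = 0 := by linarith
      have hda : d = armd i false := dig0 hd hdi
      exact ⟨y, ⟨hy, by simpa using hyi⟩, by rw [hda]⟩
    | true =>
      norm_num at hwi
      have hsum : y i + d i = 3 := by linarith
      have hyi : y i = 1 := by linarith
      have hdi : d i = 2 := by linarith
      have hda : d = armd i true := dig2 hd hdi
      exact ⟨y, ⟨hy, by simpa using hyi⟩, by rw [hda]⟩
  have hbdd : ∀ x ∈ S, dist x (bd i s) ≤ 2 := fun w hw => h.distK hw.1 (h.bd_mem i s)
  exact contract_to_pt (fm_bd i s) hSg hbdd x ⟨hxK, hxi⟩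

end Good

noncomputable def PcS (K : Set E3) : Set E3 := fm ctr '' K
noncomputable def PaS (K : Set E3) (i : Fin 3) (s : Bool) : Set E3 := fm (armd i s) '' K
noncomputable def RestS (K : Set E3) (i : Fin 3) (s : Bool) : Set E3 :=
  PcS K ∪ ⋃ q : Fin 3 × Bool, (if q = (i, s) then ∅ else PaS K q.1 q.2)

namespace Good

variable {K : Set E3}

lemma Pc_sub (h : Good K) : PcS K ⊆ K := by
  rintro x ⟨y, hy, rfl⟩; exact h.fm_mem hy ctr_mem_Dset

lemma Pa_sub (h : Good K) (i : Fin 3) (s : Bool) : PaS K i s ⊆ K := by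
  rintro x ⟨y, hy, rfl⟩; exact h.fm_mem hy (armd_mem_Dset i s)

lemma Pc_compact (h : Good K) : IsCompact (PcS K) := h.comp.image (fm_cont ctr)

lemma Pa_compact (h : Good K) (i : Fin 3) (s : Bool) : IsCompact (PaS K i s) :=
  h.comp.image (fm_cont (armd i s))

lemma rest_compact (h : Good K) (i : Fin 3) (s : Bool) : IsCompact (RestS K i s) := by
  refine (h.Pc_compact).union (isCompact_iUnion fun q => ?_)
  split_ifs
  · exact isCompact_empty
  · exact h.Pa_compact q.1 q.2

lemma jn_mem_Pc (h : Good K) (i : Fin 3) (s : Bool) : jn i s ∈ PcS K :=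
  ⟨bd i s, h.bd_mem i s, rfl⟩

lemma jn_mem_Pa (h : Good K) (i : Fin 3) (s : Bool) : jn i s ∈ PaS K i s :=
  ⟨bd i (!s), h.bd_mem i (!s), (jn_eq_arm i s).symm⟩

lemma jn_mem_rest (h : Good K) (i : Fin 3) (s : Bool) (j : Fin 3) (t : Bool) :
    jn i s ∈ RestS K j t := Or.inl (h.jn_mem_Pc i s)

lemma PcPa (h : Good K) (i : Fin 3) (s : Bool) : PcS K ∩ PaS K i s ⊆ {jn i s} := by
  rintro x ⟨⟨y, hy, rfl⟩, ⟨z, hz, hxz⟩⟩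
  have hc : fm (armd i s) z i = fm ctr y i := by rw [hxz]
  rw [fm_apply, fm_apply, ctr_apply, armd_apply, if_pos rfl] at hc
  have hy01 := h.bound01 y hy i
  have hz01 := h.bound01 z hz i
  cases s with
  | false =>
    norm_num at hc
    have hyi : y i = 0 := by linarith
    have hyb : y = bd i false := h.face y hy i false (by simpa using hyi)
    rw [mem_singleton_iff, hyb]; rfl
  | true =>
    norm_num at hc
    have hyi : y i = 1 := by linarith
    have hyb : y = bd i true := h.face y hy i true (by simpa using hyi)
    rw [mem_singleton_iff, hyb]; rfl

lemma PaPa (h : Good K) {i j : Fin 3} {s t : Bool} (hne : (i, s) ≠ (j, t)) :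
    PaS K i s ∩ PaS K j t = ∅ := by
  rw [eq_empty_iff_forall_notMem]
  rintro x ⟨⟨y, hy, rfl⟩, ⟨z, hz, hzx⟩⟩
  have hy01 := h.bound01 y hy
  have hz01 := h.bound01 z hz
  by_cases hij : i = j
  · subst hij
    have hc : fm (armd i t) z i = fm (armd i s) y i := by rw [hzx]
    rw [fm_apply, fm_apply, armd_apply, armd_apply, if_pos rfl, if_pos rfl] at hc
    cases s <;> cases t <;> norm_num at hc <;>
      first
      | exact hne rfl
      | linarith [(hy01 i).1, (hy01 i).2, (hz01 i).1, (hz01 i).2]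
  · have hji : ¬ (j = i) := fun hh => hij hh.symm
    have hc : fm (armd j t) z i = fm (armd i s) y i := by rw [hzx]
    rw [fm_apply, fm_apply, armd_apply, armd_apply, if_pos rfl, if_neg hij] at hc
    -- deduce x = jn i s
    have hxjn : fm (armd i s) y = jn i s := by
      cases s with
      | false =>
        norm_num at hc
        have hyi : y i = 1 := by linarith [(hy01 i).2, (hz01 i).1]
        have hyb : y = bd i true := h.face y hy i true (by simpa using hyi)
        rw [hyb, jn_eq_arm]; rfl
      | true =>
        norm_num at hc
        have hyi : y i = 0 := by linarith [(hy01 i).1, (hz01 i).2]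
        have hyb : y = bd i false := h.face y hy i false (by simpa using hyi)
        rw [hyb, jn_eq_arm]; rfl
    have hxj : fm (armd i s) y j = 2⁻¹ := by
      rw [hxjn, jn_apply, if_neg hji]
    have hcj : fm (armd j t) z j = 2⁻¹ := by rw [hzx, hxj]
    rw [fm_apply, armd_apply, if_pos rfl] at hcj
    cases t <;> norm_num at hcj <;> linarith [(hz01 j).1, (hz01 j).2]

lemma coverK (h : Good K) : K = PcS K ∪ ⋃ q : Fin 3 × Bool, PaS K q.1 q.2 := by
  apply Subset.antisymm
  · intro x hx
    obtain ⟨y, hy, d, hd, rfl⟩ := (h.mem x).1 hx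
    rcases Dset_cases hd with rfl | ⟨i, s, rfl⟩
    · exact Or.inl ⟨y, hy, rfl⟩
    · exact Or.inr (mem_iUnion.2 ⟨(i, s), ⟨y, hy, rfl⟩⟩)
  · rintro x (hx | hx)
    · exact h.Pc_sub hx
    · obtain ⟨q, hq⟩ := mem_iUnion.1 hx
      exact h.Pa_sub q.1 q.2 hq

lemma restP (h : Good K) (i : Fin 3) (s : Bool) : PaS K i s ∪ RestS K i s = K := by
  apply Subset.antisymm
  · rintro x (hx | hx)
    · exact h.Pa_sub i s hx
    · rcases hx with hx | hx
      · exact h.Pc_sub hx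
      · obtain ⟨q, hq⟩ := mem_iUnion.1 hx
        split_ifs at hq with hq'
        · exact absurd hq (notMem_empty x)
        · exact h.Pa_sub q.1 q.2 hq
  · intro x hx
    rcases (h.coverK ▸ hx : x ∈ PcS K ∪ ⋃ q : Fin 3 × Bool, PaS K q.1 q.2) with hx' | hx'
    · exact Or.inr (Or.inl hx')
    · obtain ⟨q, hq⟩ := mem_iUnion.1 hx'
      by_cases hqis : q = (i, s)
      · subst hqis; exact Or.inl hq
      · exact Or.inr (Or.inr (mem_iUnion.2 ⟨q, by rw [if_neg hqis]; exact hq⟩))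

lemma restInt (h : Good K) (i : Fin 3) (s : Bool) : RestS K i s ∩ PaS K i s ⊆ {jn i s} := by
  rintro x ⟨hr | hr, hpa⟩
  · exact h.PcPa i s ⟨hr, hpa⟩
  · obtain ⟨q, hq⟩ := mem_iUnion.1 hr
    split_ifs at hq with hq'
    · exact absurd hq (notMem_empty x)
    · have : (q.1, q.2) ≠ (i, s) := by simpa using hq'
      exact absurd ((h.PaPa this).subset (⟨hq, hpa⟩ : x ∈ PaS K q.1 q.2 ∩ PaS K i s))
        (notMem_empty x)

end Good

namespace Good

variable {K : Set E3}

lemma sep (h : Good K) : ∀ n : ℕ, ∀ a ∈ K, ∀ b ∈ K, 4 / 3^n ≤ dist a b →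
    ∃ p A B, IsCompact A ∧ IsCompact B ∧ A ∪ B = K ∧ A ∩ B = {p} ∧
      a ∈ A ∧ b ∈ B ∧ a ≠ p ∧ b ≠ p := by
  classical
  intro n
  induction n with
  | zero =>
    intro a ha b hb hd
    exfalso
    have := h.distK ha hb
    norm_num at hd
    linarith
  | succ n ih =>
    intro a ha b hb hdist
    by_cases hcom : ∃ d ∈ Dset, a ∈ fm d '' K ∧ b ∈ fm d '' K
    · obtain ⟨d, hd, ⟨a', ha', rfl⟩, ⟨b', hb', rfl⟩⟩ := hcom
      have hd3 : dist a' b' = 3 * dist (fm d a') (fm d b') := by rw [fm_dist]; ring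
      have hd' : 4 / 3^n ≤ dist a' b' := by
        have hq : (4:ℝ)/3^n = 3 * (4/3^(n+1)) := by
          rw [pow_succ]
          have h3 : (3:ℝ)^n ≠ 0 := by positivity
          field_simp
        rw [hq, hd3]
        have h30 : (0:ℝ) < 3 := by norm_num
        exact mul_le_mul_of_nonneg_left hdist (by norm_num)
      obtain ⟨p', A', B', cA, cB, hun, hint, haA, hbB, hap, hbp⟩ := ih a' ha' b' hb' hd'
      have hp'A : p' ∈ A' := by
        have : p' ∈ A' ∩ B' := hint ▸ rfl
        exact this.1
      have hp'B : p' ∈ B' := by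
        have : p' ∈ A' ∩ B' := hint ▸ rfl
        exact this.2
      have hA'K : A' ⊆ K := by rw [← hun]; exact subset_union_left
      have hB'K : B' ⊆ K := by rw [← hun]; exact subset_union_right
      rcases Dset_cases hd with rfl | ⟨i, s, rfl⟩
      · -- center cell case
        set UA : Set E3 := ⋃ q : Fin 3 × Bool,
          (if bd q.1 q.2 ∈ A' then PaS K q.1 q.2 else ∅) with hUA
        set UB : Set E3 := ⋃ q : Fin 3 × Bool,
          (if bd q.1 q.2 ∈ A' then ∅ else PaS K q.1 q.2) with hUB
        refine ⟨fm ctr p', fm ctr '' A' ∪ UA, fm ctr '' B' ∪ UB, ?_, ?_, ?_, ?_, ?_, ?_, ?_, ?_⟩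
        · refine (cA.image (fm_cont ctr)).union (isCompact_iUnion fun q => ?_)
          split_ifs
          · exact h.Pa_compact q.1 q.2
          · exact isCompact_empty
        · refine (cB.image (fm_cont ctr)).union (isCompact_iUnion fun q => ?_)
          split_ifs
          · exact isCompact_empty
          · exact h.Pa_compact q.1 q.2
        · -- union is K
          have h1 : (fm ctr '' A' ∪ UA) ∪ (fm ctr '' B' ∪ UB)
              = (fm ctr '' A' ∪ fm ctr '' B') ∪ (UA ∪ UB) := by
            rw [union_union_union_comm]
          rw [h1, ← image_union, hun]
          have h2 : UA ∪ UB = ⋃ q : Fin 3 × Bool, PaS K q.1 q.2 := by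
            rw [hUA, hUB, ← iUnion_union_distrib]
            apply iUnion_congr
            intro q
            split_ifs
            · rw [union_empty]
            · rw [empty_union]
          rw [h2]
          exact h.coverK.symm
        · -- intersection is {p}
          apply Subset.antisymm
          · rintro x ⟨hxA | hxA, hxB | hxB⟩
            · obtain ⟨u, hu, rfl⟩ := hxA
              obtain ⟨v, hv, hvu⟩ := hxB
              have : v = u := fm_inj ctr hvu
              subst this
              have : v ∈ A' ∩ B' := ⟨hu, hv⟩
              rw [hint] at this
              rw [mem_singleton_iff, this]
            · -- x ∈ fm ctr '' A' and x ∈ UB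
              obtain ⟨q, hq⟩ := mem_iUnion.1 hxB
              split_ifs at hq with hcond
              · exact absurd hq (notMem_empty x)
              · have hxjn : x = jn q.1 q.2 := by
                  have hx1 : x ∈ PcS K := image_mono hA'K hxA
                  exact h.PcPa q.1 q.2 ⟨hx1, hq⟩
                exfalso
                apply hcond
                have : fm ctr (bd q.1 q.2) ∈ fm ctr '' A' := by
                  rw [show fm ctr (bd q.1 q.2) = jn q.1 q.2 from rfl, ← hxjn]; exact hxA
                obtain ⟨u, hu, huv⟩ := this
                have : u = bd q.1 q.2 := fm_inj ctr huv
                rwa [this] at hu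
            · -- x ∈ UA and x ∈ fm ctr '' B'
              obtain ⟨q, hq⟩ := mem_iUnion.1 hxA
              split_ifs at hq with hcond
              · have hxjn : x = jn q.1 q.2 := by
                  have hx1 : x ∈ PcS K := image_mono hB'K hxB
                  exact h.PcPa q.1 q.2 ⟨hx1, hq⟩
                have hbdB : bd q.1 q.2 ∈ B' := by
                  have : fm ctr (bd q.1 q.2) ∈ fm ctr '' B' := by
                    rw [show fm ctr (bd q.1 q.2) = jn q.1 q.2 from rfl, ← hxjn]; exact hxB
                  obtain ⟨u, hu, huv⟩ := this
                  have : u = bd q.1 q.2 := fm_inj ctr huv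
                  rwa [this] at hu
                have : bd q.1 q.2 ∈ A' ∩ B' := ⟨hcond, hbdB⟩
                rw [hint, mem_singleton_iff] at this
                rw [mem_singleton_iff, hxjn, jn, this]
              · exact absurd hq (notMem_empty x)
            · -- x ∈ UA and x ∈ UB
              obtain ⟨q, hq⟩ := mem_iUnion.1 hxA
              obtain ⟨r, hr⟩ := mem_iUnion.1 hxB
              split_ifs at hq with hcq
              · split_ifs at hr with hcr
                · exact absurd hr (notMem_empty x)
                · have hqr : (q.1, q.2) ≠ (r.1, r.2) := by
                    intro hh
                    apply hcr
                    have : q = r := by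
                      rcases q with ⟨q1, q2⟩; rcases r with ⟨r1, r2⟩
                      simpa using hh
                    rwa [← this]
                  exact absurd ((h.PaPa hqr).subset (⟨hq, hr⟩ : x ∈ PaS K q.1 q.2 ∩ PaS K r.1 r.2))
                    (notMem_empty x)
              · exact absurd hq (notMem_empty x)
          · rw [singleton_subset_iff]
            exact ⟨Or.inl ⟨p', hp'A, rfl⟩, Or.inl ⟨p', hp'B, rfl⟩⟩
        · exact Or.inl ⟨a', haA, rfl⟩
        · exact Or.inl ⟨b', hbB, rfl⟩
        · exact fun hh => hap (fm_inj ctr hh)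
        · exact fun hh => hbp (fm_inj ctr hh)
      · -- arm cell case
        set e := armd i s with he
        have hwK : bd i (!s) ∈ K := h.bd_mem i (!s)
        have hjne : jn i s = fm e (bd i (!s)) := jn_eq_arm i s
        by_cases hw : bd i (!s) ∈ A'
        · refine ⟨fm e p', fm e '' A' ∪ RestS K i s, fm e '' B', ?_, ?_, ?_, ?_, ?_, ?_, ?_, ?_⟩
          · exact (cA.image (fm_cont e)).union (h.rest_compact i s)
          · exact cB.image (fm_cont e)
          · rw [union_comm (fm e '' A') (RestS K i s), union_assoc, ← image_union, hun,
              union_comm]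
            exact h.restP i s
          · apply Subset.antisymm
            · rintro x ⟨hxA | hxA, hxB⟩
              · obtain ⟨u, hu, rfl⟩ := hxA
                obtain ⟨v, hv, hvu⟩ := hxB
                have : v = u := fm_inj e hvu
                subst this
                have : v ∈ A' ∩ B' := ⟨hu, hv⟩
                rw [hint] at this
                rw [mem_singleton_iff, this]
              · have hxPa : x ∈ PaS K i s := image_mono hB'K hxB
                have hxjn : x = jn i s := h.restInt i s ⟨hxA, hxPa⟩
                have hbdB : bd i (!s) ∈ B' := by
                  have : fm e (bd i (!s)) ∈ fm e '' B' := by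
                    rw [← hjne, ← hxjn]; exact hxB
                  obtain ⟨u, hu, huv⟩ := this
                  have : u = bd i (!s) := fm_inj e huv
                  rwa [this] at hu
                have : bd i (!s) ∈ A' ∩ B' := ⟨hw, hbdB⟩
                rw [hint, mem_singleton_iff] at this
                rw [mem_singleton_iff, hxjn, hjne, this]
            · rw [singleton_subset_iff]
              exact ⟨Or.inl ⟨p', hp'A, rfl⟩, ⟨p', hp'B, rfl⟩⟩
          · exact Or.inl ⟨a', haA, rfl⟩
          · exact ⟨b', hbB, rfl⟩
          · exact fun hh => hap (fm_inj e hh)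
          · exact fun hh => hbp (fm_inj e hh)
        · have hwB : bd i (!s) ∈ B' := by
            have : bd i (!s) ∈ A' ∪ B' := hun.symm ▸ hwK
            rcases this with hh | hh
            · exact absurd hh hw
            · exact hh
          refine ⟨fm e p', fm e '' A', fm e '' B' ∪ RestS K i s, ?_, ?_, ?_, ?_, ?_, ?_, ?_, ?_⟩
          · exact cA.image (fm_cont e)
          · exact (cB.image (fm_cont e)).union (h.rest_compact i s)
          · rw [← union_assoc, ← image_union, hun]
            exact h.restP i s
          · apply Subset.antisymm
            · rintro x ⟨hxA, hxB | hxB⟩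
              · obtain ⟨u, hu, rfl⟩ := hxA
                obtain ⟨v, hv, hvu⟩ := hxB
                have : v = u := fm_inj e hvu
                subst this
                have : v ∈ A' ∩ B' := ⟨hu, hv⟩
                rw [hint] at this
                rw [mem_singleton_iff, this]
              · have hxPa : x ∈ PaS K i s := image_mono hA'K hxA
                have hxjn : x = jn i s := h.restInt i s ⟨hxB, hxPa⟩
                exfalso
                apply hw
                have : fm e (bd i (!s)) ∈ fm e '' A' := by
                  rw [← hjne, ← hxjn]; exact hxA
                obtain ⟨u, hu, huv⟩ := this
                have : u = bd i (!s) := fm_inj e huv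
                rwa [this] at hu
            · rw [singleton_subset_iff]
              exact ⟨⟨p', hp'A, rfl⟩, Or.inl ⟨p', hp'B, rfl⟩⟩
          · exact ⟨a', haA, rfl⟩
          · exact Or.inl ⟨b', hbB, rfl⟩
          · exact fun hh => hap (fm_inj e hh)
          · exact fun hh => hbp (fm_inj e hh)
    · -- a, b in no common cell
      by_cases hac : a ∈ PcS K
      · by_cases hbc : b ∈ PcS K
        · exact absurd ⟨ctr, ctr_mem_Dset, hac, hbc⟩ hcom
        · obtain ⟨q, hbq⟩ : ∃ q : Fin 3 × Bool, b ∈ PaS K q.1 q.2 := by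
            rcases (h.coverK ▸ hb : b ∈ PcS K ∪ ⋃ q : Fin 3 × Bool, PaS K q.1 q.2) with hh | hh
            · exact absurd hh hbc
            · exact mem_iUnion.1 hh
          refine ⟨jn q.1 q.2, RestS K q.1 q.2, PaS K q.1 q.2, h.rest_compact q.1 q.2,
            h.Pa_compact q.1 q.2, by rw [union_comm]; exact h.restP q.1 q.2, ?_, Or.inl hac, hbq,
            ?_, ?_⟩
          · apply Subset.antisymm (h.restInt q.1 q.2)
            rw [singleton_subset_iff]
            exact ⟨h.jn_mem_rest q.1 q.2 q.1 q.2, h.jn_mem_Pa q.1 q.2⟩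
          · intro hh
            exact hcom ⟨armd q.1 q.2, armd_mem_Dset q.1 q.2, hh ▸ h.jn_mem_Pa q.1 q.2, hbq⟩
          · intro hh
            exact hcom ⟨ctr, ctr_mem_Dset, hac, hh ▸ h.jn_mem_Pc q.1 q.2⟩
      · obtain ⟨q, haq⟩ : ∃ q : Fin 3 × Bool, a ∈ PaS K q.1 q.2 := by
          rcases (h.coverK ▸ ha : a ∈ PcS K ∪ ⋃ q : Fin 3 × Bool, PaS K q.1 q.2) with hh | hh
          · exact absurd hh hac
          · exact mem_iUnion.1 hh
        have hbrest : b ∈ RestS K q.1 q.2 := by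
          rcases (h.coverK ▸ hb : b ∈ PcS K ∪ ⋃ r : Fin 3 × Bool, PaS K r.1 r.2) with hh | hh
          · exact Or.inl hh
          · obtain ⟨r, hr⟩ := mem_iUnion.1 hh
            by_cases hrq : r = q
            · subst hrq
              exact absurd ⟨armd r.1 r.2, armd_mem_Dset r.1 r.2, haq, hr⟩ hcom
            · refine Or.inr (mem_iUnion.2 ⟨r, ?_⟩)
              rw [if_neg (by rcases q with ⟨q1,q2⟩; exact hrq)]
              exact hr
        refine ⟨jn q.1 q.2, PaS K q.1 q.2, RestS K q.1 q.2, h.Pa_compact q.1 q.2,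
          h.rest_compact q.1 q.2, h.restP q.1 q.2, ?_, haq, hbrest, ?_, ?_⟩
        · apply Subset.antisymm
          · intro x hx
            exact h.restInt q.1 q.2 ⟨hx.2, hx.1⟩
          · rw [singleton_subset_iff]
            exact ⟨h.jn_mem_Pa q.1 q.2, h.jn_mem_rest q.1 q.2 q.1 q.2⟩
        · intro hh
          exact hac (hh ▸ h.jn_mem_Pc q.1 q.2)
        · intro hh
          exact hcom ⟨armd q.1 q.2, armd_mem_Dset q.1 q.2, haq, hh ▸ h.jn_mem_Pa q.1 q.2⟩

end Good

noncomputable def SFun (S : Set E3) : Set E3 := ⋃ d ∈ Dset, fm d '' S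

def Qcube : Set E3 := {x | ∀ i, 0 ≤ x i ∧ x i ≤ 1}

lemma Dset_finite : Dset.Finite := by
  rw [Dset]
  exact (((((((Set.finite_singleton _).insert _).insert _).insert _).insert _).insert _).insert _)

lemma Qcube_dist : ∀ x ∈ Qcube, ∀ y ∈ Qcube, dist x y ≤ 2 := by
  intro x hx y hy
  rw [EuclideanSpace.dist_eq]
  have hsq : ∀ i : Fin 3, dist (x i) (y i) ^ 2 ≤ 1 := by
    intro i
    have h1 := hx i
    have h2 := hy i
    rw [Real.dist_eq]
    have : |x i - y i| ≤ 1 := by rw [abs_le]; constructor <;> linarith [h1.1, h1.2, h2.1, h2.2]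
    nlinarith [abs_nonneg (x i - y i)]
  have hsum : (∑ i, dist (x i) (y i) ^ 2) ≤ 3 := by
    rw [Fin.sum_univ_three]
    linarith [hsq 0, hsq 1, hsq 2]
  calc Real.sqrt (∑ i, dist (x i) (y i) ^ 2) ≤ Real.sqrt 4 :=
        Real.sqrt_le_sqrt (by linarith)
    _ = 2 := by rw [show (4:ℝ) = 2^2 by norm_num, Real.sqrt_sq (by norm_num : (0:ℝ) ≤ 2)]

lemma Qcube_convex : Convex ℝ Qcube := by
  intro x hx y hy α β hα hβ hαβ
  intro i
  have hxi := hx i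
  have hyi := hy i
  have : (α • x + β • y) i = α * x i + β * y i := rfl
  rw [this]
  constructor
  · nlinarith [hxi.1, hyi.1]
  · nlinarith [hxi.2, hyi.2]

lemma Qcube_closed : IsClosed Qcube := by
  have : Qcube = ⋂ i : Fin 3, (fun x : E3 => x i) ⁻¹' (Set.Icc 0 1) := by
    ext x
    simp only [mem_iInter, mem_preimage, mem_Icc]
    rfl
  rw [this]
  exact isClosed_iInter fun i => (isClosed_Icc).preimage (Good.coord_cont i)

lemma Qcube_compact : IsCompact Qcube := by
  have hsub : Qcube ⊆ Metric.closedBall 0 2 := by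
    intro x hx
    rw [Metric.mem_closedBall]
    have h0 : (0:E3) ∈ Qcube := by intro i; constructor <;> norm_num [show (0:E3) i = 0 from rfl]
    exact Qcube_dist x hx 0 h0
  exact (isCompact_closedBall 0 2).of_isClosed_subset Qcube_closed hsub

lemma SFun_mono {S T : Set E3} (h : S ⊆ T) : SFun S ⊆ SFun T := by
  intro x hx
  obtain ⟨d, hd, hxd⟩ := mem_iUnion₂.1 hx
  exact mem_iUnion₂.2 ⟨d, hd, image_mono h hxd⟩

lemma SFun_Q_sub : SFun Qcube ⊆ Qcube := by
  intro x hx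
  obtain ⟨d, hd, y, hy, rfl⟩ := mem_iUnion₂.1 hx
  intro i
  rw [fm_apply]
  have h1 := (hy i).1
  have h2 := (hy i).2
  have h3 := Dset_coord_nonneg hd i
  have h4 := Dset_coord_le hd i
  constructor <;> [linarith; linarith]

lemma SFun_compact {S : Set E3} (hS : IsCompact S) : IsCompact (SFun S) :=
  Dset_finite.isCompact_biUnion (fun d _ => hS.image (fm_cont d))

namespace Good

variable {K : Set E3}

lemma SFunK (h : Good K) : SFun K = K := by
  ext x
  constructor
  · intro hx
    obtain ⟨d, hd, y, hy, rfl⟩ := mem_iUnion₂.1 hx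
    exact h.fm_mem hy hd
  · intro hx
    obtain ⟨y, hy, d, hd, rfl⟩ := (h.mem x).1 hx
    exact mem_iUnion₂.2 ⟨d, hd, y, hy, rfl⟩

lemma K_sub_Q (h : Good K) : K ⊆ Qcube := fun x hx i => h.bound01 x hx i

lemma SFun_preconn (h : Good K) {S : Set E3} (hS : IsPreconnected S) (hKS : K ⊆ S) :
    IsPreconnected (SFun S) := by
  have hPc : IsPreconnected (fm ctr '' S) := hS.image _ (fm_cont ctr).continuousOn
  have hPa : ∀ q : Fin 3 × Bool, IsPreconnected (fm (armd q.1 q.2) '' S) :=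
    fun q => hS.image _ (fm_cont (armd q.1 q.2)).continuousOn
  have hj1 : ∀ (i : Fin 3) (s : Bool), jn i s ∈ fm ctr '' S :=
    fun i s => ⟨bd i s, hKS (h.bd_mem i s), rfl⟩
  have hj2 : ∀ (i : Fin 3) (s : Bool), jn i s ∈ fm (armd i s) '' S :=
    fun i s => ⟨bd i (!s), hKS (h.bd_mem i (!s)), (jn_eq_arm i s).symm⟩
  have hT : ∀ q : Fin 3 × Bool, IsPreconnected (fm ctr '' S ∪ fm (armd q.1 q.2) '' S) :=
    fun q => IsPreconnected.union (jn q.1 q.2) (hj1 q.1 q.2) (hj2 q.1 q.2) hPc (hPa q)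
  have kk : SFun S = ⋃₀ (Set.range (fun q : Fin 3 × Bool => fm ctr '' S ∪ fm (armd q.1 q.2) '' S)) := by
    apply Subset.antisymm
    · intro x hx
      obtain ⟨d, hd, hxd⟩ := mem_iUnion₂.1 hx
      rcases Dset_cases hd with rfl | ⟨i, s, rfl⟩
      · exact ⟨_, ⟨(0, false), rfl⟩, Or.inl hxd⟩
      · exact ⟨_, ⟨(i, s), rfl⟩, Or.inr hxd⟩
    · rintro x ⟨t, ⟨q, rfl⟩, hx | hx⟩
      · exact mem_iUnion₂.2 ⟨ctr, ctr_mem_Dset, hx⟩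
      · exact mem_iUnion₂.2 ⟨armd q.1 q.2, armd_mem_Dset q.1 q.2, hx⟩
  rw [kk]
  apply isPreconnected_sUnion (jn 0 false)
  · rintro t ⟨q, rfl⟩
    exact Or.inl (hj1 0 false)
  · rintro t ⟨q, rfl⟩
    exact hT q

lemma connected (h : Good K) : IsConnected K := by
  refine ⟨h.ne, ?_⟩
  set S : ℕ → Set E3 := fun n => SFun^[n] Qcube with hSdef
  have hSsucc : ∀ n, S (n+1) = SFun (S n) := fun n => Function.iterate_succ_apply' SFun n Qcube
  have hKS : ∀ n, K ⊆ S n := by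
    intro n
    induction n with
    | zero => exact h.K_sub_Q
    | succ n ih => rw [hSsucc]; exact h.SFunK ▸ SFun_mono ih
  have hScomp : ∀ n, IsCompact (S n) := by
    intro n
    induction n with
    | zero => exact Qcube_compact
    | succ n ih => rw [hSsucc]; exact SFun_compact ih
  have hSconn : ∀ n, IsPreconnected (S n) := by
    intro n
    induction n with
    | zero => exact Qcube_convex.isPreconnected
    | succ n ih => rw [hSsucc]; exact h.SFun_preconn ih (hKS n)
  have hmono : ∀ n, S (n+1) ⊆ S n := by
    intro n
    induction n with
    | zero => rw [hSsucc]; exact SFun_Q_sub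
    | succ n ih =>
      rw [hSsucc (n+1)]
      have h2 : SFun (S (n+1)) ⊆ SFun (S n) := SFun_mono ih
      rwa [← hSsucc n] at h2
  have hanti : Antitone S := antitone_nat_of_succ_le hmono
  have happrox : ∀ n, ∀ x ∈ S n, ∃ y ∈ K, dist x y ≤ 2 * (3⁻¹:ℝ)^n := by
    intro n
    induction n with
    | zero =>
      intro x hx
      obtain ⟨y, hy⟩ := h.ne
      exact ⟨y, hy, by simpa using Qcube_dist x hx y (h.K_sub_Q hy)⟩
    | succ n ih =>
      intro x hx
      rw [hSsucc] at hx
      obtain ⟨d, hd, x', hx', rfl⟩ := mem_iUnion₂.1 hx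
      obtain ⟨y', hy', hdist⟩ := ih x' hx'
      refine ⟨fm d y', h.fm_mem hy' hd, ?_⟩
      rw [fm_dist]
      calc 3⁻¹ * dist x' y' ≤ 3⁻¹ * (2 * (3⁻¹:ℝ)^n) := by
            nlinarith [dist_nonneg (x := x') (y := y')]
        _ = 2 * (3⁻¹:ℝ)^(n+1) := by ring
  have hKinter : K = ⋂ n, S n := by
    apply Subset.antisymm
    · exact subset_iInter hKS
    · intro x hx
      have : x ∈ closure K := by
        rw [Metric.mem_closure_iff]
        intro ε hε
        obtain ⟨n, hn⟩ := exists_pow_lt_of_lt_one (show (0:ℝ) < ε/2 by linarith)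
          (by norm_num : (3⁻¹:ℝ) < 1)
        obtain ⟨y, hy, hdist⟩ := happrox n x (mem_iInter.1 hx n)
        exact ⟨y, hy, lt_of_le_of_lt hdist (by linarith)⟩
      rwa [h.comp.isClosed.closure_eq] at this
  intro U V hU hV hUV hUne hVne
  by_contra hempty
  rw [not_nonempty_iff_eq_empty] at hempty
  set A := K \ U with hA
  set B := K \ V with hB
  have hAcomp : IsCompact A := h.comp.diff hU
  have hBcomp : IsCompact B := h.comp.diff hV
  have hABK : A ∪ B = K := by
    apply Subset.antisymm
    · rintro x (hx | hx) <;> exact hx.1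
    · intro x hx
      by_cases hxU : x ∈ U
      · right
        refine ⟨hx, fun hxV => ?_⟩
        have : x ∈ K ∩ (U ∩ V) := ⟨hx, hxU, hxV⟩
        rw [hempty] at this
        exact this
      · exact Or.inl ⟨hx, hxU⟩
  have hdisj : Disjoint A B := by
    rw [Set.disjoint_iff]
    rintro x ⟨⟨hxK, hxU⟩, ⟨_, hxV⟩⟩
    rcases hUV hxK with hh | hh
    · exact hxU hh
    · exact hxV hh
  have hAne : A.Nonempty := by
    obtain ⟨y, hyK, hyV⟩ := hVne
    refine ⟨y, hyK, fun hyU => ?_⟩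
    have : y ∈ K ∩ (U ∩ V) := ⟨hyK, hyU, hyV⟩
    rw [hempty] at this
    exact this
  have hBne : B.Nonempty := by
    obtain ⟨y, hyK, hyU⟩ := hUne
    refine ⟨y, hyK, fun hyV => ?_⟩
    have : y ∈ K ∩ (U ∩ V) := ⟨hyK, hyU, hyV⟩
    rw [hempty] at this
    exact this
  obtain ⟨U', V', hU', hV', hAU', hBV', hd'⟩ :=
    SeparatedNhds.of_isCompact_isCompact hAcomp hBcomp hdisj
  have hSn : ∃ n, S n ⊆ U' ∪ V' := by
    by_contra hno
    push_neg at hno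
    set C : ℕ → Set E3 := fun n => S n \ (U' ∪ V') with hC
    have hCne : ∀ n, (C n).Nonempty := by
      intro n
      obtain ⟨x, hx, hx'⟩ := not_subset.1 (hno n)
      exact ⟨x, hx, hx'⟩
    have hCcomp : ∀ n, IsCompact (C n) := fun n => (hScomp n).diff (hU'.union hV')
    have hCcl : ∀ n, IsClosed (C n) := fun n => (hCcomp n).isClosed
    have hCdir : Directed (· ⊇ ·) C := by
      intro m n
      refine ⟨max m n, ?_, ?_⟩
      · exact diff_subset_diff_left (hanti (le_max_left m n))
      · exact diff_subset_diff_left (hanti (le_max_right m n))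
    have hIne := IsCompact.nonempty_iInter_of_directed_nonempty_isCompact_isClosed
      C hCdir hCne hCcomp hCcl
    obtain ⟨x, hx⟩ := hIne
    have hxK : x ∈ K := by
      rw [hKinter]
      exact mem_iInter.2 fun n => ((mem_iInter.1 hx n) : x ∈ C n).1
    have hxnot : x ∉ U' ∪ V' := ((mem_iInter.1 hx 0) : x ∈ C 0).2
    rcases (hABK.symm ▸ hxK : x ∈ A ∪ B) with hh | hh
    · exact hxnot (Or.inl (hAU' hh))
    · exact hxnot (Or.inr (hBV' hh))
  obtain ⟨n, hn⟩ := hSn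
  have h1 : (S n ∩ U').Nonempty := by
    obtain ⟨y, hy⟩ := hAne
    exact ⟨y, hKS n (hABK ▸ Or.inl hy), hAU' hy⟩
  have h2 : (S n ∩ V').Nonempty := by
    obtain ⟨y, hy⟩ := hBne
    exact ⟨y, hKS n (hABK ▸ Or.inr hy), hBV' hy⟩
  obtain ⟨y, _, hyUV⟩ := hSconn n U' V' hU' hV' hn h1 h2
  exact (hd'.le_bot hyUV : y ∈ (⊥ : Set E3))

end Good

noncomputable def CellsF (K : Set E3) : ℕ → Set (Set E3)
  | 0 => {K}
  | (n+1) => ⋃ d ∈ Dset, (fun B => fm d '' B) '' CellsF K n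

lemma cells_finite (K : Set E3) : ∀ n, (CellsF K n).Finite := by
  intro n
  induction n with
  | zero => exact finite_singleton K
  | succ n ih => exact Dset_finite.biUnion (fun d _ => ih.image _)

namespace Good

variable {K : Set E3}

lemma cells_spec (h : Good K) (hKc : IsPreconnected K) : ∀ n, ∀ C ∈ CellsF K n,
    IsCompact C ∧ IsPreconnected C ∧ C ⊆ K ∧
      (∀ x ∈ C, ∀ y ∈ C, dist x y ≤ 2 * (3⁻¹:ℝ)^n) := by
  intro n
  induction n with
  | zero =>
    intro C hC
    rw [CellsF, mem_singleton_iff] at hC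
    subst hC
    exact ⟨h.comp, hKc, Subset.rfl, fun x hx y hy => by simpa using h.distK hx hy⟩
  | succ n ih =>
    intro C hC
    rw [CellsF] at hC
    obtain ⟨d, hd, B, hB, rfl⟩ := mem_iUnion₂.1 hC
    obtain ⟨hBc, hBp, hBK, hBd⟩ := ih B hB
    refine ⟨hBc.image (fm_cont d), hBp.image _ (fm_cont d).continuousOn, ?_, ?_⟩
    · rintro x ⟨y, hy, rfl⟩
      exact h.fm_mem (hBK hy) hd
    · rintro x ⟨x', hx', rfl⟩ y ⟨y', hy', rfl⟩
      rw [fm_dist]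
      calc 3⁻¹ * dist x' y' ≤ 3⁻¹ * (2 * (3⁻¹:ℝ)^n) := by
            nlinarith [dist_nonneg (x := x') (y := y'), hBd x' hx' y' hy']
        _ = 2 * (3⁻¹:ℝ)^(n+1) := by ring

lemma cells_cover (h : Good K) (hKc : IsPreconnected K) : ∀ n, ⋃₀ CellsF K n = K := by
  intro n
  induction n with
  | zero => rw [CellsF]; exact sUnion_singleton K
  | succ n ih =>
    apply Subset.antisymm
    · rintro x ⟨C, hC, hxC⟩
      exact (h.cells_spec hKc (n+1) C hC).2.2.1 hxC
    · intro x hx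
      obtain ⟨y, hy, d, hd, rfl⟩ := (h.mem x).1 hx
      obtain ⟨B, hB, hyB⟩ : ∃ B ∈ CellsF K n, y ∈ B := by
        have : y ∈ ⋃₀ CellsF K n := ih.symm ▸ hy
        exact this
      refine ⟨fm d '' B, ?_, ⟨y, hyB, rfl⟩⟩
      rw [CellsF]
      exact mem_iUnion₂.2 ⟨d, hd, B, hB, rfl⟩

lemma locallyConnected (h : Good K) (hKc : IsPreconnected K) : LocallyConnectedSpace K := by
  rw [locallyConnectedSpace_iff_connected_subsets]
  intro x U hU
  rw [nhds_induced, Filter.mem_comap] at hU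
  obtain ⟨t, ht, htU⟩ := hU
  obtain ⟨ε, hε, hball⟩ := Metric.mem_nhds_iff.1 ht
  obtain ⟨n, hn⟩ := exists_pow_lt_of_lt_one (show (0:ℝ) < ε/2 by linarith)
    (by norm_num : (3⁻¹:ℝ) < 1)
  set N : Set E3 := ⋃₀ {C | C ∈ CellsF K n ∧ (x : E3) ∈ C} with hN
  set R : Set E3 := ⋃₀ {C | C ∈ CellsF K n ∧ (x : E3) ∉ C} with hR
  have hNK : N ⊆ K := by
    rintro y ⟨C, ⟨hC, _⟩, hyC⟩
    exact (h.cells_spec hKc n C hC).2.2.1 hyC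
  have hNprec : IsPreconnected N :=
    isPreconnected_sUnion (x : E3) _ (fun C hC => hC.2)
      (fun C hC => (h.cells_spec hKc n C hC.1).2.1)
  have hNsmall : N ⊆ Metric.ball (x : E3) ε := by
    rintro y ⟨C, ⟨hC, hxC⟩, hyC⟩
    have := (h.cells_spec hKc n C hC).2.2.2 y hyC (x : E3) hxC
    rw [Metric.mem_ball]
    calc dist y (x : E3) ≤ 2 * (3⁻¹:ℝ)^n := this
      _ < ε := by linarith
  have hRclosed : IsClosed R := by
    have hfin : {C | C ∈ CellsF K n ∧ (x : E3) ∉ C}.Finite :=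
      (cells_finite K n).subset (fun C hC => hC.1)
    rw [hR, sUnion_eq_biUnion]
    exact hfin.isClosed_biUnion (fun C hC => (h.cells_spec hKc n C hC.1).1.isClosed)
  have hxR : (x : E3) ∉ R := by
    rintro ⟨C, ⟨_, hxC⟩, hxC'⟩
    exact hxC hxC'
  obtain ⟨δ, hδ, hδball⟩ := Metric.isOpen_iff.1 hRclosed.isOpen_compl (x : E3) hxR
  refine ⟨Subtype.val ⁻¹' N, ?_, ?_, ?_⟩
  · rw [nhds_induced, Filter.mem_comap]
    refine ⟨Metric.ball (x : E3) δ, Metric.ball_mem_nhds _ hδ, ?_⟩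
    intro y hy
    have hyK : (y : E3) ∈ K := y.2
    have hycov : (y : E3) ∈ ⋃₀ CellsF K n := (h.cells_cover hKc n).symm ▸ hyK
    obtain ⟨C, hC, hyC⟩ := hycov
    by_cases hxC : (x : E3) ∈ C
    · exact ⟨C, ⟨hC, hxC⟩, hyC⟩
    · exfalso
      have : (y : E3) ∈ R := ⟨C, ⟨hC, hxC⟩, hyC⟩
      exact (hδball hy) this
  · have himg : (Subtype.val : ↥K → E3) '' ((Subtype.val : ↥K → E3) ⁻¹' N) = N := by
      rw [Subtype.image_preimage_coe]
      exact inter_eq_self_of_subset_right hNK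
    exact (Topology.IsInducing.subtypeVal.isPreconnected_image).mp (by rw [himg]; exact hNprec)
  · intro y hy
    exact htU (hball (hNsmall hy))

end Good

section Sphere

lemma sphere_compl_preconn (v : Metric.sphere (0 : EuclideanSpace ℝ (Fin 2)) 1) :
    IsPreconnected (({v}ᶜ : Set (Metric.sphere (0 : EuclideanSpace ℝ (Fin 2)) 1))) := by
  haveI : Fact (Module.finrank ℝ (EuclideanSpace ℝ (Fin 2)) = 1 + 1) :=
    ⟨by simp [finrank_euclideanSpace_fin]⟩
  set e := stereographic' 1 v with he
  have hsrc : e.source = {v}ᶜ := stereographic'_source v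
  have htgt : e.target = (univ : Set (EuclideanSpace ℝ (Fin 1))) := stereographic'_target v
  let φ := e.toHomeomorphSourceTarget
  have htprec : IsPreconnected e.target := htgt ▸ isPreconnected_univ
  have hsprec : IsPreconnected e.source := by
    rw [isPreconnected_iff_preconnectedSpace]
    haveI : PreconnectedSpace e.target := Subtype.preconnectedSpace htprec
    refine ⟨?_⟩
    have himg : (univ : Set e.source) = φ.symm '' univ := by
      rw [image_univ, φ.symm.surjective.range_eq]
    rw [himg]
    exact isPreconnected_univ.image _ φ.symm.continuous.continuousOn
  rw [← hsrc]
  exact hsprec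

noncomputable def spt1 : Metric.sphere (0 : EuclideanSpace ℝ (Fin 2)) 1 :=
  ⟨EuclideanSpace.single 0 1, by
    rw [mem_sphere_zero_iff_norm, EuclideanSpace.norm_single]; norm_num⟩

noncomputable def spt2 : Metric.sphere (0 : EuclideanSpace ℝ (Fin 2)) 1 :=
  ⟨-EuclideanSpace.single 0 1, by
    rw [mem_sphere_zero_iff_norm, norm_neg, EuclideanSpace.norm_single]; norm_num⟩

noncomputable def spt3 : Metric.sphere (0 : EuclideanSpace ℝ (Fin 2)) 1 :=
  ⟨EuclideanSpace.single 1 1, by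
    rw [mem_sphere_zero_iff_norm, EuclideanSpace.norm_single]; norm_num⟩

lemma spt12 : spt1 ≠ spt2 := by
  intro hh
  have h0 := congrArg (fun w : Metric.sphere (0 : EuclideanSpace ℝ (Fin 2)) 1 => (w : EuclideanSpace ℝ (Fin 2)) 0) hh
  simp only [spt1, spt2] at h0
  rw [show ((-EuclideanSpace.single 0 1 : EuclideanSpace ℝ (Fin 2)) 0) = -((EuclideanSpace.single 0 (1:ℝ) : EuclideanSpace ℝ (Fin 2)) 0) from rfl] at h0
  rw [EuclideanSpace.single_apply] at h0
  norm_num at h0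

lemma spt13 : spt1 ≠ spt3 := by
  intro hh
  have h0 := congrArg (fun w : Metric.sphere (0 : EuclideanSpace ℝ (Fin 2)) 1 => (w : EuclideanSpace ℝ (Fin 2)) 0) hh
  simp only [spt1, spt3] at h0
  rw [EuclideanSpace.single_apply, EuclideanSpace.single_apply] at h0
  norm_num at h0

end Sphere

namespace Good

variable {K : Set E3}

lemma noCircle (h : Good K) :
    ¬ ∃ C : Set E3, C ⊆ K ∧
      Nonempty (C ≃ₜ Metric.sphere (0 : EuclideanSpace ℝ (Fin 2)) 1) := by
  rintro ⟨C, hCK, ⟨e⟩⟩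
  set a' : ↥C := e.symm spt1 with ha'
  set b' : ↥C := e.symm spt2 with hb'
  set a : E3 := ↑a' with haa
  set b : E3 := ↑b' with hbb
  have haC : a ∈ C := a'.2
  have hbC : b ∈ C := b'.2
  have haK : a ∈ K := hCK haC
  have hbK : b ∈ K := hCK hbC
  have hab : a ≠ b := by
    intro hh
    have h1 : a' = b' := Subtype.ext hh
    have h2 : spt1 = spt2 := by
      have := congrArg e h1
      rwa [ha', hb', e.apply_symm_apply, e.apply_symm_apply] at this
    exact spt12 h2
  have hd0 : 0 < dist a b := dist_pos.2 hab
  obtain ⟨n, hn⟩ := exists_pow_lt_of_lt_one (show (0:ℝ) < dist a b / 4 by linarith)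
    (by norm_num : (3⁻¹:ℝ) < 1)
  have hle : 4 / 3^n ≤ dist a b := by
    have hq : (4:ℝ) / 3^n = 4 * (3⁻¹)^n := by
      rw [inv_pow, div_eq_mul_inv]
    rw [hq]
    linarith
  obtain ⟨p, A, B, hAc, hBc, hun, hint, haA, hbB, hap, hbp⟩ := h.sep n a haK b hbK hle
  -- choose the point to delete from C
  obtain ⟨z, hza, hzb, hzp⟩ : ∃ z : ↥C, (z : E3) ≠ a ∧ (z : E3) ≠ b ∧ (p ∈ C → (z : E3) = p) := by
    by_cases hpC : p ∈ C
    · exact ⟨⟨p, hpC⟩, fun hh => hap hh.symm, fun hh => hbp hh.symm, fun _ => rfl⟩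
    · refine ⟨e.symm spt3, ?_, ?_, fun hh => absurd hh hpC⟩
      · intro hh
        have h1 : e.symm spt3 = a' := Subtype.ext hh
        have h2 := congrArg e h1
        rw [e.apply_symm_apply, ha', e.apply_symm_apply] at h2
        exact spt13 h2.symm
      · intro hh
        have h1 : e.symm spt3 = b' := Subtype.ext hh
        have h2 := congrArg e h1
        rw [e.apply_symm_apply, hb', e.apply_symm_apply] at h2
        -- spt3 = spt2
        have h3 := congrArg (fun w : Metric.sphere (0 : EuclideanSpace ℝ (Fin 2)) 1 =>
          (w : EuclideanSpace ℝ (Fin 2)) 1) h2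
        simp only [spt2, spt3] at h3
        rw [show ((-EuclideanSpace.single 0 1 : EuclideanSpace ℝ (Fin 2)) 1) =
          -((EuclideanSpace.single 0 (1:ℝ) : EuclideanSpace ℝ (Fin 2)) 1) from rfl] at h3
        rw [EuclideanSpace.single_apply, EuclideanSpace.single_apply] at h3
        norm_num at h3
  set S : Set E3 := C \ {(z : E3)} with hS
  have hSprec : IsPreconnected S := by
    have h1 : IsPreconnected (({e z}ᶜ :
        Set (Metric.sphere (0 : EuclideanSpace ℝ (Fin 2)) 1))) := sphere_compl_preconn (e z)
    have hcont : Continuous (fun w : Metric.sphere (0 : EuclideanSpace ℝ (Fin 2)) 1 =>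
        ((e.symm w : ↥C) : E3)) := continuous_subtype_val.comp e.symm.continuous
    have h2 := h1.image _ hcont.continuousOn
    have him : (fun w : Metric.sphere (0 : EuclideanSpace ℝ (Fin 2)) 1 =>
        ((e.symm w : ↥C) : E3)) '' ({e z}ᶜ) = S := by
      apply Subset.antisymm
      · rintro x ⟨w, hw, rfl⟩
        refine ⟨(e.symm w).2, ?_⟩
        intro hh
        rw [mem_singleton_iff] at hh
        have h3 : e.symm w = z := Subtype.ext hh
        apply hw
        rw [mem_singleton_iff, ← h3, e.apply_symm_apply]
      · rintro x ⟨hxC, hxz⟩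
        refine ⟨e ⟨x, hxC⟩, ?_, ?_⟩
        · intro hh
          rw [mem_singleton_iff] at hh
          have h3 : (⟨x, hxC⟩ : ↥C) = z := e.injective hh
          apply hxz
          rw [mem_singleton_iff, ← h3]
        · show ((e.symm (e ⟨x, hxC⟩) : ↥C) : E3) = x
          rw [e.symm_apply_apply]
    rwa [him] at h2
  have haS : a ∈ S := ⟨haC, fun hh => hza (mem_singleton_iff.1 hh).symm⟩
  have hbS : b ∈ S := ⟨hbC, fun hh => hzb (mem_singleton_iff.1 hh).symm⟩
  have hSsub : S ⊆ A ∪ B := fun x hx => hun.symm ▸ hCK hx.1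
  have hpS : p ∉ S := by
    rintro ⟨hpC, hpz⟩
    exact hpz (mem_singleton_iff.2 (hzp hpC).symm)
  obtain ⟨y, hyS, hyAB⟩ := isPreconnected_closed_iff.1 hSprec A B hAc.isClosed hBc.isClosed
    hSsub ⟨a, haS, haA⟩ ⟨b, hbS, hbB⟩
  have hyp : y = p := by
    have : y ∈ A ∩ B := hyAB
    rwa [hint, mem_singleton_iff] at this
  exact hpS (hyp ▸ hyS)

end Good

/-- A set `K ⊆ ℝ³` is a dendrite if it is compact, connected, locally connected and contains
no subset homeomorphic to a circle. -/
def IsDendrite (K : Set E3) : Prop :=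
  IsCompact K ∧ IsConnected K ∧ LocallyConnectedSpace K ∧
    ¬ ∃ C : Set E3, C ⊆ K ∧ Nonempty (C ≃ₜ Metric.sphere (0 : EuclideanSpace ℝ (Fin 2)) 1)

/-- The fractal 3-cube of order 3 with digit set
`D = {(0,1,1), (1,0,1), (1,1,0), (1,1,1), (1,1,2), (1,2,1), (2,1,1)}` is a dendrite. -/
theorem fractal_cube_4289552_is_dendrite
    (K : Set E3) (hne : K.Nonempty) (hcomp : IsCompact K)
    (hfc : (3 : ℝ) • K = K + ({v3 0 1 1, v3 1 0 1, v3 1 1 0, v3 1 1 1,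
      v3 1 1 2, v3 1 2 1, v3 2 1 1} : Set E3)) :
    IsDendrite K := by
  have hfc' : (3:ℝ) • K = K + Dset := hfc
  have hmem : ∀ x, x ∈ K ↔ ∃ y ∈ K, ∃ d ∈ Dset, x = fm d y := by
    intro x
    constructor
    · intro hx
      have h3 : (3:ℝ) • x ∈ (3:ℝ) • K := smul_mem_smul_set hx
      rw [hfc'] at h3
      obtain ⟨y, hy, d, hd, hyd⟩ := Set.mem_add.1 h3
      refine ⟨y, hy, d, hd, ?_⟩
      have hsm : (3:ℝ)⁻¹ • ((3:ℝ) • x) = x := by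
        rw [smul_smul, show ((3:ℝ)⁻¹ * 3) = 1 by norm_num, one_smul]
      rw [fm, hyd, hsm]
    · rintro ⟨y, hy, d, hd, rfl⟩
      have h1 : (3:ℝ) • fm d y = y + d := by
        rw [fm, smul_smul, show ((3:ℝ) * 3⁻¹) = 1 by norm_num, one_smul]
      have h2 : (3:ℝ) • fm d y ∈ (3:ℝ) • K := by
        rw [hfc', h1]; exact Set.add_mem_add hy hd
      exact (smul_mem_smul_set_iff₀ (by norm_num : (3:ℝ) ≠ 0) K _).1 h2
  have hg : Good K := ⟨hne, hcomp, hmem⟩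
  have hconn := hg.connected
  exact ⟨hcomp, hconn, hg.locallyConnected hconn.isPreconnected, hg.noCircle⟩
end

section
/- The fractal 3-cube of order 3 with digit set D = {(0,0,2), (1,0,0), (1,0,1), (1,0,2), (1,1,1), (1,2,1), (2,0,2)} (the unique nonempty compact K ⊆ ℝ³ with 3·K = K + D) is a dendrite. -/
open Pointwise

namespace FD
open Set
noncomputable def da : E3 := v3 0 0 2
noncomputable def db : E3 := v3 1 0 0
noncomputable def dc : E3 := v3 1 0 1
noncomputable def de : E3 := v3 1 0 2
noncomputable def df : E3 := v3 1 1 1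
noncomputable def dg : E3 := v3 1 2 1
noncomputable def dh : E3 := v3 2 0 2
noncomputable def D7 : Set E3 := {da, db, dc, de, df, dg, dh}

lemma v3_zero (a b c : ℝ) : v3 a b c 0 = a := rfl
lemma v3_one (a b c : ℝ) : v3 a b c 1 = b := rfl
lemma v3_two (a b c : ℝ) : v3 a b c 2 = c := rfl

def cube : Set E3 := {p | ∀ i, p i ∈ Set.Icc (0:ℝ) 1}

lemma digit_bounds : ∀ d ∈ D7, ∀ i : Fin 3, 0 ≤ d i ∧ d i ≤ 2 := by
  intro d hd i
  rcases hd with rfl|rfl|rfl|rfl|rfl|rfl|rfl <;> fin_cases i <;>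
    simp [da, db, dc, de, df, dg, dh, v3_zero, v3_one, v3_two] <;> norm_num

variable {K : Set E3}

lemma mem_of_fc (hfc : (3:ℝ) • K = K + D7) {x : E3} (hx : x ∈ K) :
    ∃ k ∈ K, ∃ d ∈ D7, x = (3:ℝ)⁻¹ • (k + d) := by
  have h3 : (3:ℝ) • x ∈ (3:ℝ) • K := smul_mem_smul_set hx
  rw [hfc] at h3
  rcases h3 with ⟨k, hk, d, hd, hkd⟩
  have hkd' : k + d = (3:ℝ) • x := hkd
  exact ⟨k, hk, d, hd, by rw [hkd', inv_smul_smul₀ (by norm_num : (3:ℝ) ≠ 0)]⟩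

lemma K_subset_cube (hne : K.Nonempty) (hcomp : IsCompact K)
    (hfc : (3:ℝ) • K = K + D7) : K ⊆ cube := by
  intro p hp i
  constructor
  · -- min
    obtain ⟨x, hxK, hxmin⟩ := hcomp.exists_isMinOn hne ((EuclideanSpace.proj i).continuous.continuousOn)
    obtain ⟨k, hk, d, hd, hx⟩ := mem_of_fc hfc hxK
    have hdi := (digit_bounds d hd i).1
    have hki : x i ≤ k i := hxmin hk
    have hxi : x i = 3⁻¹ * (k i + d i) := by rw [hx]; rfl
    have : 0 ≤ x i := by nlinarith
    exact this.trans (hxmin hp)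
  · obtain ⟨x, hxK, hxmax⟩ := hcomp.exists_isMaxOn hne ((EuclideanSpace.proj i).continuous.continuousOn)
    obtain ⟨k, hk, d, hd, hx⟩ := mem_of_fc hfc hxK
    have hdi := (digit_bounds d hd i).2
    have hki : k i ≤ x i := hxmax hk
    have hxi : x i = 3⁻¹ * (k i + d i) := by rw [hx]; rfl
    have : x i ≤ 1 := by nlinarith
    exact (hxmax hp).trans this

lemma norm_le_two {p : E3} (h : ∀ i, |p i| ≤ 1) : ‖p‖ ≤ 2 := by
  have h1 : ‖p‖ = Real.sqrt (∑ i, ‖p i‖ ^ 2) := EuclideanSpace.norm_eq p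
  have h2 : (∑ i, ‖p i‖ ^ 2) ≤ 3 := by
    have : ∀ i : Fin 3, ‖p i‖ ^ 2 ≤ 1 := by
      intro i
      have := h i
      rw [Real.norm_eq_abs]
      nlinarith [abs_nonneg (p i)]
    calc (∑ i, ‖p i‖ ^ 2) ≤ ∑ _i : Fin 3, (1:ℝ) := Finset.sum_le_sum (fun i _ => this i)
    _ = 3 := by simp
  rw [h1]
  calc Real.sqrt (∑ i, ‖p i‖ ^ 2) ≤ Real.sqrt 3 := Real.sqrt_le_sqrt h2
  _ ≤ 2 := by
      rw [show (2:ℝ) = Real.sqrt 4 by rw [show (4:ℝ) = 2^2 by norm_num, Real.sqrt_sq]; norm_num]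
      exact Real.sqrt_le_sqrt (by norm_num)

lemma cube_norm_le {p : E3} (hp : p ∈ cube) : ‖p‖ ≤ 2 := by
  apply norm_le_two
  intro i
  obtain ⟨h0, h1⟩ := hp i
  rw [abs_le]; constructor <;> linarith

/-- An expanding-invariant subset of a bounded set is at most the fixed point. -/
lemma expand_singleton {S : Set E3} (hScube : S ⊆ cube) {d : E3}
    (hdc : (2⁻¹:ℝ) • d ∈ cube) (hstep : ∀ p ∈ S, (3:ℝ) • p - d ∈ S) :
    ∀ p ∈ S, p = (2⁻¹:ℝ) • d := by
  intro p hp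
  set q : E3 := (2⁻¹:ℝ) • d with hq
  by_contra hne
  have key : ∀ n : ℕ, ∃ r ∈ S, r - q = (3:ℝ)^n • (p - q) := by
    intro n
    induction n with
    | zero => exact ⟨p, hp, by simp⟩
    | succ n ih =>
      obtain ⟨r, hr, hrq⟩ := ih
      refine ⟨(3:ℝ) • r - d, hstep r hr, ?_⟩
      have : (3:ℝ) • r - d - q = (3:ℝ) • (r - q) := by
        rw [smul_sub, hq]
        rw [show (3:ℝ) • ((2⁻¹:ℝ) • d) = (2⁻¹:ℝ) • d + d by
          rw [smul_smul]; rw [show (3:ℝ) * 2⁻¹ = 2⁻¹ + 1 by norm_num, add_smul, one_smul]]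
        abel
      rw [this, hrq, smul_smul]
      ring_nf
  have hε : 0 < ‖p - q‖ := by
    rw [norm_pos_iff, sub_ne_zero]; exact hne
  obtain ⟨n, hn⟩ := pow_unbounded_of_one_lt (4 / ‖p - q‖) (by norm_num : (1:ℝ) < 3)
  obtain ⟨r, hr, hrq⟩ := key n
  have hb : ‖r - q‖ ≤ 4 := by
    calc ‖r - q‖ ≤ ‖r‖ + ‖q‖ := norm_sub_le _ _
    _ ≤ 2 + 2 := add_le_add (cube_norm_le (hScube hr)) (cube_norm_le hdc)
    _ = 4 := by norm_num
  have : ‖r - q‖ = 3^n * ‖p - q‖ := by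
    rw [hrq, norm_smul]
    simp [abs_of_nonneg (pow_nonneg (by norm_num : (0:ℝ) ≤ 3) n)]
  rw [this] at hb
  have : 4 < 3^n * ‖p - q‖ := by
    rw [div_lt_iff₀ hε] at hn
    linarith
  linarith
@[simp] lemma da0 : da 0 = 0 := rfl
@[simp] lemma da1 : da 1 = 0 := rfl
@[simp] lemma da2 : da 2 = 2 := rfl
@[simp] lemma db0 : db 0 = 1 := rfl
@[simp] lemma db1 : db 1 = 0 := rfl
@[simp] lemma db2 : db 2 = 0 := rfl
@[simp] lemma dc0 : dc 0 = 1 := rfl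
@[simp] lemma dc1 : dc 1 = 0 := rfl
@[simp] lemma dc2 : dc 2 = 1 := rfl
@[simp] lemma de0 : de 0 = 1 := rfl
@[simp] lemma de1 : de 1 = 0 := rfl
@[simp] lemma de2 : de 2 = 2 := rfl
@[simp] lemma df0 : df 0 = 1 := rfl
@[simp] lemma df1 : df 1 = 1 := rfl
@[simp] lemma df2 : df 2 = 1 := rfl
@[simp] lemma dg0 : dg 0 = 1 := rfl
@[simp] lemma dg1 : dg 1 = 2 := rfl
@[simp] lemma dg2 : dg 2 = 1 := rfl
@[simp] lemma dh0 : dh 0 = 2 := rfl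
@[simp] lemma dh1 : dh 1 = 0 := rfl
@[simp] lemma dh2 : dh 2 = 2 := rfl

lemma smul_apply' (c : ℝ) (p : E3) (i : Fin 3) : (c • p) i = c * p i := rfl
lemma add_apply' (p q : E3) (i : Fin 3) : (p + q) i = p i + q i := rfl
lemma sub_apply' (p q : E3) (i : Fin 3) : (p - q) i = p i - q i := rfl

lemma face_gen (hcube : K ⊆ cube) (hfc : (3:ℝ) • K = K + D7) (i : Fin 3) (c : ℝ) (d0 : E3)
    (hd0c : (2⁻¹:ℝ) • d0 ∈ cube)
    (hforce : ∀ k d', k ∈ K → d' ∈ D7 → k i + d' i = 3 * c → d' = d0 ∧ k i = c) :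
    ∀ p ∈ K, p i = c → p = (2⁻¹:ℝ) • d0 := by
  intro p hp hpc
  refine expand_singleton (S := {p | p ∈ K ∧ p i = c}) ?_ hd0c ?_ p ⟨hp, hpc⟩
  · exact fun x hx => hcube hx.1
  · rintro x ⟨hxK, hxc⟩
    obtain ⟨k, hk, d', hd', hx⟩ := mem_of_fc hfc hxK
    have hxi : x i = 3⁻¹ * (k i + d' i) := by rw [hx]; rfl
    have heq : k i + d' i = 3 * c := by rw [hxc] at hxi; linarith
    obtain ⟨hdd, hkc⟩ := hforce k d' hk hd' heq
    have h3x : (3:ℝ) • x = k + d' := by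
      rw [hx, smul_inv_smul₀ (by norm_num : (3:ℝ) ≠ 0)]
    have : (3:ℝ) • x - d0 = k := by rw [h3x, hdd]; abel
    rw [this]
    exact ⟨hk, hkc⟩

lemma half_cube {a b c : ℝ} (ha : 0 ≤ a ∧ a ≤ 2) (hb : 0 ≤ b ∧ b ≤ 2) (hc : 0 ≤ c ∧ c ≤ 2) :
    (2⁻¹:ℝ) • v3 a b c ∈ cube := by
  intro i
  fin_cases i <;>
    · constructor <;> simp [smul_apply', v3_zero, v3_one, v3_two] <;> linarith [ha.1, ha.2, hb.1, hb.2, hc.1, hc.2]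

section Faces
variable (hcube : K ⊆ cube) (hfc : (3:ℝ) • K = K + D7)
include hcube hfc

lemma face_x0 : ∀ p ∈ K, p 0 = 0 → p = (2⁻¹:ℝ) • da := by
  refine face_gen hcube hfc 0 0 da (half_cube (by norm_num) (by norm_num) (by norm_num)) ?_
  intro k d' hk hd' heq
  have hb := hcube hk 0
  rcases hd' with rfl|rfl|rfl|rfl|rfl|rfl|rfl <;>
    simp only [da0, db0, dc0, de0, df0, dg0, dh0] at heq <;>
    first
      | exact ⟨rfl, by linarith [hb.1, hb.2]⟩
      | (exfalso; linarith [hb.1, hb.2])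

lemma face_x1 : ∀ p ∈ K, p 0 = 1 → p = (2⁻¹:ℝ) • dh := by
  refine face_gen hcube hfc 0 1 dh (half_cube (by norm_num) (by norm_num) (by norm_num)) ?_
  intro k d' hk hd' heq
  have hb := hcube hk 0
  rcases hd' with rfl|rfl|rfl|rfl|rfl|rfl|rfl <;>
    simp only [da0, db0, dc0, de0, df0, dg0, dh0] at heq <;>
    first
      | exact ⟨rfl, by linarith [hb.1, hb.2]⟩
      | (exfalso; linarith [hb.1, hb.2])

lemma face_z0 : ∀ p ∈ K, p 2 = 0 → p = (2⁻¹:ℝ) • db := by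
  refine face_gen hcube hfc 2 0 db (half_cube (by norm_num) (by norm_num) (by norm_num)) ?_
  intro k d' hk hd' heq
  have hb := hcube hk 2
  rcases hd' with rfl|rfl|rfl|rfl|rfl|rfl|rfl <;>
    simp only [da2, db2, dc2, de2, df2, dg2, dh2] at heq <;>
    first
      | exact ⟨rfl, by linarith [hb.1, hb.2]⟩
      | (exfalso; linarith [hb.1, hb.2])

lemma face_y1 : ∀ p ∈ K, p 1 = 1 → p = (2⁻¹:ℝ) • dg := by
  refine face_gen hcube hfc 1 1 dg (half_cube (by norm_num) (by norm_num) (by norm_num)) ?_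
  intro k d' hk hd' heq
  have hb := hcube hk 1
  rcases hd' with rfl|rfl|rfl|rfl|rfl|rfl|rfl <;>
    simp only [da1, db1, dc1, de1, df1, dg1, dh1] at heq <;>
    first
      | exact ⟨rfl, by linarith [hb.1, hb.2]⟩
      | (exfalso; linarith [hb.1, hb.2])

end Faces

/-- The piece of `K` corresponding to digit `d`. -/
def P (K : Set E3) (d : E3) : Set E3 := {x | (3:ℝ) • x - d ∈ K}

lemma P_closed (hK : IsClosed K) (d : E3) : IsClosed (P K d) := by
  have : Continuous (fun x : E3 => (3:ℝ) • x - d) :=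
    (continuous_id.const_smul (3:ℝ)).sub continuous_const
  exact hK.preimage this

lemma piece_cover (hfc : (3:ℝ) • K = K + D7) : ∀ x ∈ K,
    x ∈ P K da ∨ x ∈ P K db ∨ x ∈ P K dc ∨ x ∈ P K de ∨ x ∈ P K df ∨ x ∈ P K dg ∨ x ∈ P K dh := by
  intro x hx
  obtain ⟨k, hk, d, hd, hxe⟩ := mem_of_fc hfc hx
  have hPx : x ∈ P K d := by
    show (3:ℝ) • x - d ∈ K
    rw [hxe, smul_inv_smul₀ (by norm_num : (3:ℝ) ≠ 0)]
    simpa using hk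
  rcases hd with rfl|rfl|rfl|rfl|rfl|rfl|rfl <;> tauto

lemma piece_bounds (hcube : K ⊆ cube) {x d : E3} (hx : x ∈ P K d) (i : Fin 3) :
    d i ≤ 3 * x i ∧ 3 * x i ≤ 1 + d i := by
  have h := hcube hx i
  obtain ⟨h1, h2⟩ := h
  have e : ((3:ℝ) • x - d) i = 3 * x i - d i := rfl
  rw [e] at h1 h2
  constructor <;> linarith

lemma piece_mem_K {x d : E3} (hx : x ∈ P K d) : (3:ℝ) • x - d ∈ K := hx

lemma piece_eq_of_face {x d w : E3} (h : (3:ℝ) • x - d = w) : x = (3⁻¹:ℝ) • (w + d) := by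
  have h3 : (3:ℝ) • x = w + d := by rw [← h]; abel
  rw [← h3, inv_smul_smul₀ (by norm_num : (3:ℝ) ≠ 0)]

section Pts
variable (hcube : K ⊆ cube) (hfc : (3:ℝ) • K = K + D7)
include hcube hfc

lemma pt_via_x0 {x d : E3} (hx : x ∈ P K d) (h : 3 * x 0 - d 0 = 0) :
    x = (3⁻¹:ℝ) • ((2⁻¹:ℝ) • da + d) := by
  refine piece_eq_of_face (face_x0 hcube hfc _ (piece_mem_K hx) h)

lemma pt_via_x1 {x d : E3} (hx : x ∈ P K d) (h : 3 * x 0 - d 0 = 1) :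
    x = (3⁻¹:ℝ) • ((2⁻¹:ℝ) • dh + d) := by
  refine piece_eq_of_face (face_x1 hcube hfc _ (piece_mem_K hx) h)

lemma pt_via_z0 {x d : E3} (hx : x ∈ P K d) (h : 3 * x 2 - d 2 = 0) :
    x = (3⁻¹:ℝ) • ((2⁻¹:ℝ) • db + d) := by
  refine piece_eq_of_face (face_z0 hcube hfc _ (piece_mem_K hx) h)

lemma pt_via_y1 {x d : E3} (hx : x ∈ P K d) (h : 3 * x 1 - d 1 = 1) :
    x = (3⁻¹:ℝ) • ((2⁻¹:ℝ) • dg + d) := by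
  refine piece_eq_of_face (face_y1 hcube hfc _ (piece_mem_K hx) h)

end Pts

lemma mix_apply (u d : E3) (i : Fin 3) :
    ((3⁻¹:ℝ) • ((2⁻¹:ℝ) • u + d)) i = 3⁻¹ * (2⁻¹ * u i + d i) := rfl

section Steps
variable (hcube : K ⊆ cube) (hfc : (3:ℝ) • K = K + D7)
include hcube hfc

lemma step1 {q : E3} (h1 : q ∈ P K da)
    (h2 : q ∈ P K db ∨ q ∈ P K dc ∨ q ∈ P K de ∨ q ∈ P K df ∨ q ∈ P K dg ∨ q ∈ P K dh) :
    q = (3⁻¹:ℝ) • ((2⁻¹:ℝ) • dh + da) := by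
  have Ba0 := piece_bounds hcube h1 0
  simp only [da0] at Ba0
  rcases h2 with h|h|h|h|h|h
  · exfalso
    have ha := (piece_bounds hcube h1 2).1
    have hb := (piece_bounds hcube h 2).2
    simp only [da2, db2] at ha hb; linarith
  · have hc := (piece_bounds hcube h 0).1
    simp only [dc0] at hc
    exact pt_via_x1 hcube hfc h1 (by simp only [da0]; linarith)
  · have hc := (piece_bounds hcube h 0).1
    simp only [de0] at hc
    exact pt_via_x1 hcube hfc h1 (by simp only [da0]; linarith)
  · have hc := (piece_bounds hcube h 0).1
    simp only [df0] at hc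
    exact pt_via_x1 hcube hfc h1 (by simp only [da0]; linarith)
  · exfalso
    have ha := (piece_bounds hcube h1 1).2
    have hb := (piece_bounds hcube h 1).1
    simp only [da1, dg1] at ha hb; linarith
  · exfalso
    have hb := (piece_bounds hcube h 0).1
    simp only [dh0] at hb; linarith

lemma step2 {q : E3} (h1 : q ∈ P K dh)
    (h2 : q ∈ P K db ∨ q ∈ P K dc ∨ q ∈ P K de ∨ q ∈ P K df ∨ q ∈ P K dg) :
    q = (3⁻¹:ℝ) • ((2⁻¹:ℝ) • da + dh) := by
  have Bh0 := piece_bounds hcube h1 0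
  simp only [dh0] at Bh0
  rcases h2 with h|h|h|h|h
  · exfalso
    have ha := (piece_bounds hcube h1 2).1
    have hb := (piece_bounds hcube h 2).2
    simp only [dh2, db2] at ha hb; linarith
  · have hc := (piece_bounds hcube h 0).2
    simp only [dc0] at hc
    exact pt_via_x0 hcube hfc h1 (by simp only [dh0]; linarith)
  · have hc := (piece_bounds hcube h 0).2
    simp only [de0] at hc
    exact pt_via_x0 hcube hfc h1 (by simp only [dh0]; linarith)
  · have hc := (piece_bounds hcube h 0).2
    simp only [df0] at hc
    exact pt_via_x0 hcube hfc h1 (by simp only [dh0]; linarith)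
  · exfalso
    have ha := (piece_bounds hcube h1 1).2
    have hb := (piece_bounds hcube h 1).1
    simp only [dh1, dg1] at ha hb; linarith

lemma step3 {q : E3} (h1 : q ∈ P K dg)
    (h2 : q ∈ P K db ∨ q ∈ P K dc ∨ q ∈ P K de ∨ q ∈ P K df) :
    q = (3⁻¹:ℝ) • ((2⁻¹:ℝ) • dg + df) := by
  have Bg1 := piece_bounds hcube h1 1
  simp only [dg1] at Bg1
  rcases h2 with h|h|h|h
  · exfalso
    have hb := (piece_bounds hcube h 1).2
    simp only [db1] at hb; linarith
  · exfalso
    have hb := (piece_bounds hcube h 1).2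
    simp only [dc1] at hb; linarith
  · exfalso
    have hb := (piece_bounds hcube h 1).2
    simp only [de1] at hb; linarith
  · have hb := (piece_bounds hcube h 1).2
    simp only [df1] at hb
    exact pt_via_y1 hcube hfc h (by simp only [df1]; linarith)

lemma step4 {q : E3} (h1 : q ∈ P K df)
    (h2 : q ∈ P K db ∨ q ∈ P K dc ∨ q ∈ P K de) :
    q = (3⁻¹:ℝ) • ((2⁻¹:ℝ) • dg + dc) := by
  have Bf1 := piece_bounds hcube h1 1
  simp only [df1] at Bf1
  rcases h2 with h|h|h
  · exfalso
    have hb := (piece_bounds hcube h 1).2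
    simp only [db1] at hb
    have hq := pt_via_y1 hcube hfc h (by simp only [db1]; linarith)
    have hz := (piece_bounds hcube h1 2).1
    rw [hq] at hz
    simp only [mix_apply, dg2, db2, df2] at hz
    norm_num at hz
  · have hb := (piece_bounds hcube h 1).2
    simp only [dc1] at hb
    exact pt_via_y1 hcube hfc h (by simp only [dc1]; linarith)
  · exfalso
    have hb := (piece_bounds hcube h 1).2
    simp only [de1] at hb
    have hq := pt_via_y1 hcube hfc h (by simp only [de1]; linarith)
    have hz := (piece_bounds hcube h1 2).2
    rw [hq] at hz
    simp only [mix_apply, dg2, de2, df2] at hz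
    norm_num at hz

lemma step5 {q : E3} (h1 : q ∈ P K db)
    (h2 : q ∈ P K dc ∨ q ∈ P K de) :
    q = (3⁻¹:ℝ) • ((2⁻¹:ℝ) • db + dc) := by
  have Bb2 := piece_bounds hcube h1 2
  simp only [db2] at Bb2
  rcases h2 with h|h
  · have hb := (piece_bounds hcube h 2).1
    simp only [dc2] at hb
    exact pt_via_z0 hcube hfc h (by simp only [dc2]; linarith)
  · exfalso
    have hb := (piece_bounds hcube h 2).1
    simp only [de2] at hb; linarith

lemma step6 {q : E3} (h1 : q ∈ P K dc) (h2 : q ∈ P K de) :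
    q = (3⁻¹:ℝ) • ((2⁻¹:ℝ) • db + de) := by
  have Bc2 := piece_bounds hcube h1 2
  simp only [dc2] at Bc2
  have hb := (piece_bounds hcube h2 2).1
  simp only [de2] at hb
  exact pt_via_z0 hcube hfc h2 (by simp only [de2]; linarith)

end Steps

lemma absorb {C B : Set E3} {p : E3} (hB : IsClosed B) (hC : IsPreconnected C)
    (hsub : C \ {p} ⊆ B) : C ⊆ B ∨ C ⊆ {p} := by
  by_cases hpC : p ∈ C
  · by_cases hCB : (C ∩ B).Nonempty
    · have cover : C ⊆ B ∪ {p} := by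
        intro x hx
        by_cases hxp : x = p
        · exact Or.inr (by simp [hxp])
        · exact Or.inl (hsub ⟨hx, by simp [hxp]⟩)
      obtain ⟨z, hzC, hzB, hzp⟩ := isPreconnected_closed_iff.mp hC B {p} hB isClosed_singleton
        cover hCB ⟨p, hpC, rfl⟩
      left
      intro x hx
      by_cases hxp : x = p
      · rw [hxp, ← (show z = p from hzp)]; exact hzB
      · exact hsub ⟨hx, by simp [hxp]⟩
    · right
      intro x hx
      by_cases hxp : x = p
      · simp [hxp]
      · exact absurd (⟨x, hx, hsub ⟨hx, by simp [hxp]⟩⟩ : (C ∩ B).Nonempty) hCB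
  · left
    intro x hx
    have hxp : x ≠ p := fun h => hpC (h ▸ hx)
    exact hsub ⟨hx, by simp [hxp]⟩

lemma split {C A B : Set E3} {p : E3} (hA : IsClosed A) (hB : IsClosed B) (hCAB : C ⊆ A ∪ B)
    (hAB : ∀ q, q ∈ A → q ∈ B → q ∈ C → q = p)
    (hC : IsPreconnected C) (hCp : IsPreconnected (C \ {p})) : C ⊆ A ∨ C ⊆ B := by
  have hsing : C ⊆ {p} → C ⊆ A ∨ C ⊆ B := by
    intro hCp'
    rcases Set.eq_empty_or_nonempty C with rfl|⟨z, hz⟩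
    · exact Or.inl (empty_subset _)
    · have hzp : z = p := hCp' hz
      rcases hCAB hz with h|h
      · exact Or.inl (fun x hx => by rwa [hCp' hx, ← hzp])
      · exact Or.inr (fun x hx => by rwa [hCp' hx, ← hzp])
  by_cases hA0 : ((C \ {p}) ∩ A).Nonempty
  · by_cases hB0 : ((C \ {p}) ∩ B).Nonempty
    · obtain ⟨z, hz1, hz2, hz3⟩ := isPreconnected_closed_iff.mp hCp A B hA hB
        (fun x hx => hCAB hx.1) hA0 hB0
      exact absurd (hAB z hz2 hz3 hz1.1) hz1.2
    · have hsub : C \ {p} ⊆ A := by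
        intro x hx
        rcases hCAB hx.1 with h|h
        · exact h
        · exact absurd ⟨x, hx, h⟩ hB0
      rcases absorb hA hC hsub with h|h
      · exact Or.inl h
      · exact hsing h
  · have hsub : C \ {p} ⊆ B := by
      intro x hx
      rcases hCAB hx.1 with h|h
      · exact absurd ⟨x, hx, h⟩ hA0
      · exact h
    rcases absorb hB hC hsub with h|h
    · exact Or.inr h
    · exact hsing h

/-- The key property of a circle-like subset. -/
def Good (K C : Set E3) : Prop :=
  C ⊆ K ∧ IsPreconnected C ∧ (∀ p : E3, IsPreconnected (C \ {p})) ∧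
    ∃ x ∈ C, ∃ y ∈ C, x ≠ y

section Peel
variable (hcomp : IsCompact K) (hcube : K ⊆ cube) (hfc : (3:ℝ) • K = K + D7)
include hcomp hcube hfc

lemma peel {C : Set E3} (hG : Good K C) : ∃ d ∈ D7, C ⊆ P K d := by
  obtain ⟨hCK, hC, hCp, -⟩ := hG
  have hcl := hcomp.isClosed
  have cl : ∀ d, IsClosed (P K d) := P_closed hcl
  -- step 1 : peel off the piece `da`
  have h7 : C ⊆ P K da ∪ (P K db ∪ P K dc ∪ P K de ∪ P K df ∪ P K dg ∪ P K dh) := by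
    intro x hx
    have := piece_cover hfc x (hCK hx)
    simp only [mem_union]; tauto
  rcases split (cl da)
      ((((((cl db).union (cl dc)).union (cl de)).union (cl df)).union (cl dg)).union (cl dh))
      h7 (fun q hqa hqr _ => step1 hcube hfc hqa (by simp only [mem_union] at hqr; tauto))
      hC (hCp _) with h|h
  · exact ⟨da, by simp [D7], h⟩
  · -- step 2 : peel off `dh`
    have h6 : C ⊆ P K dh ∪ (P K db ∪ P K dc ∪ P K de ∪ P K df ∪ P K dg) := by
      intro x hx
      have := h hx
      simp only [mem_union] at this ⊢; tauto
    rcases split (cl dh)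
        (((((cl db).union (cl dc)).union (cl de)).union (cl df)).union (cl dg))
        h6 (fun q hqa hqr _ => step2 hcube hfc hqa (by simp only [mem_union] at hqr; tauto))
        hC (hCp _) with h|h
    · exact ⟨dh, by simp [D7], h⟩
    · -- step 3 : peel off `dg`
      have h5 : C ⊆ P K dg ∪ (P K db ∪ P K dc ∪ P K de ∪ P K df) := by
        intro x hx
        have := h hx
        simp only [mem_union] at this ⊢; tauto
      rcases split (cl dg)
          ((((cl db).union (cl dc)).union (cl de)).union (cl df))
          h5 (fun q hqa hqr _ => step3 hcube hfc hqa (by simp only [mem_union] at hqr; tauto))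
          hC (hCp _) with h|h
      · exact ⟨dg, by simp [D7], h⟩
      · -- step 4 : peel off `df`
        have h4 : C ⊆ P K df ∪ (P K db ∪ P K dc ∪ P K de) := by
          intro x hx
          have := h hx
          simp only [mem_union] at this ⊢; tauto
        rcases split (cl df) (((cl db).union (cl dc)).union (cl de))
            h4 (fun q hqa hqr _ => step4 hcube hfc hqa (by simp only [mem_union] at hqr; tauto))
            hC (hCp _) with h|h
        · exact ⟨df, by simp [D7], h⟩
        · -- step 5 : peel off `db`
          have h3 : C ⊆ P K db ∪ (P K dc ∪ P K de) := by
            intro x hx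
            have := h hx
            simp only [mem_union] at this ⊢; tauto
          rcases split (cl db) ((cl dc).union (cl de))
              h3 (fun q hqa hqr _ => step5 hcube hfc hqa (by simp only [mem_union] at hqr; tauto))
              hC (hCp _) with h|h
          · exact ⟨db, by simp [D7], h⟩
          · -- step 6 : `dc` vs `de`
            have h2 : C ⊆ P K dc ∪ P K de := fun x hx => by
              have := h hx; simp only [mem_union] at this ⊢; tauto
            rcases split (cl dc) (cl de)
                h2 (fun q hqa hqr _ => step6 hcube hfc hqa hqr)
                hC (hCp _) with h|h
            · exact ⟨dc, by simp [D7], h⟩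
            · exact ⟨de, by simp [D7], h⟩

lemma good_expand {C : Set E3} (hG : Good K C) {x y : E3} (hx : x ∈ C) (hy : y ∈ C) :
    ∃ C', Good K C' ∧ ∃ x' ∈ C', ∃ y' ∈ C', dist x' y' = 3 * dist x y := by
  obtain ⟨d, hd, hCd⟩ := peel hcomp hcube hfc hG
  obtain ⟨hCK, hC, hCp, w, hw, z, hz, hwz⟩ := hG
  set h : E3 → E3 := fun z => (3:ℝ) • z - d with hh
  have hcont : Continuous h := (continuous_id.const_smul (3:ℝ)).sub continuous_const
  have hinj : Function.Injective h := by
    intro u v huv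
    simp only [hh] at huv
    exact smul_right_injective E3 (by norm_num : (3:ℝ) ≠ 0) (sub_left_inj.mp huv)
  have hdist : ∀ u v : E3, dist (h u) (h v) = 3 * dist u v := by
    intro u v
    rw [dist_eq_norm, dist_eq_norm]
    have : h u - h v = (3:ℝ) • (u - v) := by simp only [hh, smul_sub]; abel
    rw [this, norm_smul]
    simp [abs_of_nonneg]
  refine ⟨h '' C, ⟨?_, ?_, ?_, ?_⟩, h x, ⟨x, hx, rfl⟩, h y, ⟨y, hy, rfl⟩, hdist x y⟩
  · rintro - ⟨u, hu, rfl⟩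
    exact hCd hu
  · exact hC.image h hcont.continuousOn
  · intro p
    have hpre : h '' C \ {p} = h '' (C \ {(3⁻¹:ℝ) • (p + d)}) := by
      rw [Set.image_diff hinj, Set.image_singleton]
      have : h ((3⁻¹:ℝ) • (p + d)) = p := by
        simp only [hh, smul_smul]
        norm_num
      rw [this]
    rw [hpre]
    exact (hCp _).image h hcont.continuousOn
  · exact ⟨h w, ⟨w, hw, rfl⟩, h z, ⟨z, hz, rfl⟩, fun e => hwz (hinj e)⟩

lemma no_good : ∀ C : Set E3, ¬ Good K C := by
  intro C hG
  obtain ⟨x0, hx0, y0, hy0, hxy0⟩ := hG.2.2.2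
  set δ := dist x0 y0 with hδ
  have hδpos : 0 < δ := dist_pos.mpr hxy0
  have iter : ∀ n : ℕ, ∃ C', Good K C' ∧ ∃ x ∈ C', ∃ y ∈ C', dist x y = 3^n * δ := by
    intro n
    induction n with
    | zero => exact ⟨C, hG, x0, hx0, y0, hy0, by simp [hδ]⟩
    | succ n ih =>
      obtain ⟨C', hG', x, hx, y, hy, hd⟩ := ih
      obtain ⟨C'', hG'', x', hx', y', hy', hd3⟩ := good_expand hcomp hcube hfc hG' hx hy
      refine ⟨C'', hG'', x', hx', y', hy', ?_⟩
      rw [hd3, hd]; ring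
  obtain ⟨n, hn⟩ := pow_unbounded_of_one_lt (4 / δ) (by norm_num : (1:ℝ) < 3)
  obtain ⟨C', hG', x, hx, y, hy, hd⟩ := iter n
  have hb : dist x y ≤ 4 := by
    rw [dist_eq_norm]
    calc ‖x - y‖ ≤ ‖x‖ + ‖y‖ := norm_sub_le _ _
    _ ≤ 2 + 2 := add_le_add (cube_norm_le (hcube (hG'.1 hx))) (cube_norm_le (hcube (hG'.1 hy)))
    _ = 4 := by norm_num
  rw [hd] at hb
  rw [div_lt_iff₀ hδpos] at hn
  linarith

end Peel

/-- One application of the Hutchinson operator. -/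
def Fm (S : Set E3) : Set E3 := {x | ∃ y ∈ S, ∃ d ∈ D7, x = (3⁻¹:ℝ) • (y + d)}

noncomputable def g (d : E3) : E3 → E3 := fun y => (3⁻¹:ℝ) • (y + d)

lemma g_cont (d : E3) : Continuous (g d) := by
  unfold g; exact ((continuous_id (X := E3)).add continuous_const).const_smul (3⁻¹:ℝ)

lemma Fm_eq (S : Set E3) : Fm S =
    g de '' S ∪ g da '' S ∪ g dh '' S ∪ g dc '' S ∪ g db '' S ∪ g df '' S ∪ g dg '' S := by
  ext x
  simp only [Fm, mem_setOf_eq, mem_union, mem_image, D7, mem_insert_iff, mem_singleton_iff, g]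
  constructor
  · rintro ⟨y, hy, d, hd, rfl⟩
    rcases hd with rfl|rfl|rfl|rfl|rfl|rfl|rfl
    · exact Or.inl (Or.inl (Or.inl (Or.inl (Or.inl (Or.inr ⟨y, hy, rfl⟩)))))
    · exact Or.inl (Or.inl (Or.inr ⟨y, hy, rfl⟩))
    · exact Or.inl (Or.inl (Or.inl (Or.inr ⟨y, hy, rfl⟩)))
    · exact Or.inl (Or.inl (Or.inl (Or.inl (Or.inl (Or.inl ⟨y, hy, rfl⟩)))))
    · exact Or.inl (Or.inr ⟨y, hy, rfl⟩)
    · exact Or.inr ⟨y, hy, rfl⟩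
    · exact Or.inl (Or.inl (Or.inl (Or.inl (Or.inr ⟨y, hy, rfl⟩))))
  · rintro ((((((⟨y,hy,rfl⟩|⟨y,hy,rfl⟩)|⟨y,hy,rfl⟩)|⟨y,hy,rfl⟩)|⟨y,hy,rfl⟩)|⟨y,hy,rfl⟩)|⟨y,hy,rfl⟩) <;>
      exact ⟨y, hy, _, by tauto, rfl⟩

lemma Fm_K (hfc : (3:ℝ) • K = K + D7) : Fm K = K := by
  ext x
  constructor
  · rintro ⟨y, hy, d, hd, rfl⟩
    have : y + d ∈ (3:ℝ) • K := by
      rw [hfc]; exact ⟨y, hy, d, hd, rfl⟩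
    obtain ⟨k, hk, hk3⟩ := this
    rw [← hk3, inv_smul_smul₀ (by norm_num : (3:ℝ) ≠ 0)]
    exact hk
  · intro hx
    exact mem_of_fc hfc hx

lemma Fm_mono {S T : Set E3} (h : S ⊆ T) : Fm S ⊆ Fm T := by
  rintro x ⟨y, hy, d, hd, rfl⟩
  exact ⟨y, h hy, d, hd, rfl⟩

lemma g_apply (d y : E3) (i : Fin 3) : g d y i = 3⁻¹ * (y i + d i) := rfl

lemma Fm_cube : Fm cube ⊆ cube := by
  rintro x ⟨y, hy, d, hd, rfl⟩
  intro i
  obtain ⟨h0, h1⟩ := hy i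
  obtain ⟨hd0, hd2⟩ := digit_bounds d hd i
  have e : ((3⁻¹:ℝ) • (y + d)) i = 3⁻¹ * (y i + d i) := rfl
  rw [e]
  constructor <;> [positivity; linarith]

lemma Fm_compact {S : Set E3} (hS : IsCompact S) : IsCompact (Fm S) := by
  rw [Fm_eq]
  exact ((((((hS.image (g_cont de)).union (hS.image (g_cont da))).union
    (hS.image (g_cont dh))).union (hS.image (g_cont dc))).union
    (hS.image (g_cont db))).union (hS.image (g_cont df))).union (hS.image (g_cont dg))

noncomputable def q1 : E3 := (2⁻¹:ℝ) • dh
noncomputable def q2 : E3 := (2⁻¹:ℝ) • da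
noncomputable def q3 : E3 := v3 (1/2) 0 1
noncomputable def q4 : E3 := (2⁻¹:ℝ) • db
noncomputable def q5 : E3 := (2⁻¹:ℝ) • dg
noncomputable def q6 : E3 := v3 (1/2) 0 (1/2)

/-- The invariant for the Hutchinson iteration starting from the cube. -/
def Inv (S : Set E3) : Prop :=
  IsCompact S ∧ IsPreconnected S ∧ S ⊆ cube ∧
    q1 ∈ S ∧ q2 ∈ S ∧ q3 ∈ S ∧ q4 ∈ S ∧ q5 ∈ S ∧ q6 ∈ S

lemma ptE3_ext {x y : E3} (h : ∀ i, x i = y i) : x = y := PiLp.ext h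
@[simp] lemma q1_0 : q1 0 = 1 := by norm_num [q1, smul_apply', v3_zero, v3_one, v3_two]
@[simp] lemma q1_1 : q1 1 = 0 := by norm_num [q1, smul_apply', v3_zero, v3_one, v3_two]
@[simp] lemma q1_2 : q1 2 = 1 := by norm_num [q1, smul_apply', v3_zero, v3_one, v3_two]
@[simp] lemma q2_0 : q2 0 = 0 := by norm_num [q2, smul_apply', v3_zero, v3_one, v3_two]
@[simp] lemma q2_1 : q2 1 = 0 := by norm_num [q2, smul_apply', v3_zero, v3_one, v3_two]
@[simp] lemma q2_2 : q2 2 = 1 := by norm_num [q2, smul_apply', v3_zero, v3_one, v3_two]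
@[simp] lemma q3_0 : q3 0 = 1/2 := by norm_num [q3, smul_apply', v3_zero, v3_one, v3_two]
@[simp] lemma q3_1 : q3 1 = 0 := by norm_num [q3, smul_apply', v3_zero, v3_one, v3_two]
@[simp] lemma q3_2 : q3 2 = 1 := by norm_num [q3, smul_apply', v3_zero, v3_one, v3_two]
@[simp] lemma q4_0 : q4 0 = 1/2 := by norm_num [q4, smul_apply', v3_zero, v3_one, v3_two]
@[simp] lemma q4_1 : q4 1 = 0 := by norm_num [q4, smul_apply', v3_zero, v3_one, v3_two]
@[simp] lemma q4_2 : q4 2 = 0 := by norm_num [q4, smul_apply', v3_zero, v3_one, v3_two]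
@[simp] lemma q5_0 : q5 0 = 1/2 := by norm_num [q5, smul_apply', v3_zero, v3_one, v3_two]
@[simp] lemma q5_1 : q5 1 = 1 := by norm_num [q5, smul_apply', v3_zero, v3_one, v3_two]
@[simp] lemma q5_2 : q5 2 = 1/2 := by norm_num [q5, smul_apply', v3_zero, v3_one, v3_two]
@[simp] lemma q6_0 : q6 0 = 1/2 := by norm_num [q6, smul_apply', v3_zero, v3_one, v3_two]
@[simp] lemma q6_1 : q6 1 = 0 := by norm_num [q6, smul_apply', v3_zero, v3_one, v3_two]
@[simp] lemma q6_2 : q6 2 = 1/2 := by norm_num [q6, smul_apply', v3_zero, v3_one, v3_two]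

lemma gq_eq {d q d' q' : E3} (h : ∀ i : Fin 3, q i + d i = q' i + d' i) : g d q = g d' q' := by
  apply ptE3_ext
  intro i
  rw [g_apply, g_apply, h i]

lemma Inv_Fm {S : Set E3} (h : Inv S) : Inv (Fm S) := by
  obtain ⟨hcp, hcn, hcu, h1, h2, h3, h4, h5, h6⟩ := h
  have memD : ∀ d ∈ ({da, db, dc, de, df, dg, dh} : Set E3), d ∈ D7 := fun d hd => hd
  have gmem : ∀ (d : E3), d ∈ D7 → ∀ q ∈ S, g d q ∈ Fm S := fun d hd q hq => ⟨q, hq, d, hd, rfl⟩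
  have hda : da ∈ D7 := by simp [D7]
  have hdb : db ∈ D7 := by simp [D7]
  have hdc : dc ∈ D7 := by simp [D7]
  have hde : de ∈ D7 := by simp [D7]
  have hdf : df ∈ D7 := by simp [D7]
  have hdg : dg ∈ D7 := by simp [D7]
  have hdh : dh ∈ D7 := by simp [D7]
  have img : ∀ d : E3, IsPreconnected (g d '' S) :=
    fun d => hcn.image (g d) (g_cont d).continuousOn
  refine ⟨Fm_compact hcp, ?_, (Fm_mono hcu).trans Fm_cube, ?_, ?_, ?_, ?_, ?_, ?_⟩
  · -- connectivity chain
    have e1 : g da q1 = g de q2 := gq_eq (by intro i; fin_cases i <;> simp <;> norm_num)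
    have e2 : g de q1 = g dh q2 := gq_eq (by intro i; fin_cases i <;> simp <;> norm_num)
    have e3 : g de q4 = g dc q3 := gq_eq (by intro i; fin_cases i <;> simp <;> norm_num)
    have e4 : g dc q4 = g db q3 := gq_eq (by intro i; fin_cases i <;> simp <;> norm_num)
    have e5 : g dc q5 = g df q6 := gq_eq (by intro i; fin_cases i <;> simp <;> norm_num)
    have e6 : g df q5 = g dg q6 := gq_eq (by intro i; fin_cases i <;> simp <;> norm_num)
    rw [Fm_eq]
    have U2 : IsPreconnected (g de '' S ∪ g da '' S) :=
      IsPreconnected.union (g de q2) ⟨q2, h2, rfl⟩ (e1 ▸ ⟨q1, h1, rfl⟩) (img de) (img da)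
    have U3 : IsPreconnected (g de '' S ∪ g da '' S ∪ g dh '' S) :=
      IsPreconnected.union (g de q1) (Or.inl ⟨q1, h1, rfl⟩) (e2 ▸ ⟨q2, h2, rfl⟩) U2 (img dh)
    have U4 : IsPreconnected (g de '' S ∪ g da '' S ∪ g dh '' S ∪ g dc '' S) :=
      IsPreconnected.union (g de q4) (Or.inl (Or.inl ⟨q4, h4, rfl⟩)) (e3 ▸ ⟨q3, h3, rfl⟩)
        U3 (img dc)
    have U5 : IsPreconnected (g de '' S ∪ g da '' S ∪ g dh '' S ∪ g dc '' S ∪ g db '' S) :=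
      IsPreconnected.union (g dc q4) (Or.inr ⟨q4, h4, rfl⟩) (e4 ▸ ⟨q3, h3, rfl⟩) U4 (img db)
    have U6 : IsPreconnected
        (g de '' S ∪ g da '' S ∪ g dh '' S ∪ g dc '' S ∪ g db '' S ∪ g df '' S) :=
      IsPreconnected.union (g dc q5) (Or.inl (Or.inr ⟨q5, h5, rfl⟩)) (e5 ▸ ⟨q6, h6, rfl⟩)
        U5 (img df)
    exact IsPreconnected.union (g df q5) (Or.inr ⟨q5, h5, rfl⟩) (e6 ▸ ⟨q6, h6, rfl⟩) U6 (img dg)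
  · have e : q1 = g dh q1 := by
      apply ptE3_ext; intro i; rw [g_apply]; fin_cases i <;> simp <;> norm_num
    exact e ▸ gmem dh hdh q1 h1
  · have e : q2 = g da q2 := by
      apply ptE3_ext; intro i; rw [g_apply]; fin_cases i <;> simp <;> norm_num
    exact e ▸ gmem da hda q2 h2
  · have e : q3 = g de q3 := by
      apply ptE3_ext; intro i; rw [g_apply]; fin_cases i <;> simp <;> norm_num
    exact e ▸ gmem de hde q3 h3
  · have e : q4 = g db q4 := by
      apply ptE3_ext; intro i; rw [g_apply]; fin_cases i <;> simp <;> norm_num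
    exact e ▸ gmem db hdb q4 h4
  · have e : q5 = g dg q5 := by
      apply ptE3_ext; intro i; rw [g_apply]; fin_cases i <;> simp <;> norm_num
    exact e ▸ gmem dg hdg q5 h5
  · have e : q6 = g dc q6 := by
      apply ptE3_ext; intro i; rw [g_apply]; fin_cases i <;> simp <;> norm_num
    exact e ▸ gmem dc hdc q6 h6

lemma cube_convex : Convex ℝ cube := by
  intro x hx y hy s t hs ht hst
  intro i
  obtain ⟨hx0, hx1⟩ := hx i
  obtain ⟨hy0, hy1⟩ := hy i
  have e : (s • x + t • y) i = s * x i + t * y i := rfl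
  rw [e]
  constructor <;> nlinarith

lemma Inv_cube : Inv cube := by
  refine ⟨?_, cube_convex.isPreconnected, subset_rfl, ?_, ?_, ?_, ?_, ?_, ?_⟩
  · -- compact
    have hcl : IsClosed cube := by
      have : cube = ⋂ i : Fin 3, (fun p : E3 => p i) ⁻¹' Set.Icc 0 1 := by
        ext p; simp [cube, mem_iInter]
      rw [this]
      exact isClosed_iInter fun i => isClosed_Icc.preimage (EuclideanSpace.proj i).continuous
    have hbd : Bornology.IsBounded cube := by
      apply Bornology.IsBounded.subset (Metric.isBounded_closedBall (x := (0:E3)) (r := 2))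
      intro p hp
      simp only [Metric.mem_closedBall, dist_zero_right]
      exact cube_norm_le hp
    exact Metric.isCompact_of_isClosed_isBounded hcl hbd
  all_goals intro i; fin_cases i <;> constructor <;> simp <;> norm_num

noncomputable def Sn (n : ℕ) : Set E3 := Fm^[n] cube

lemma Sn_succ (n : ℕ) : Sn (n+1) = Fm (Sn n) := Function.iterate_succ_apply' Fm n cube

lemma Inv_Sn : ∀ n, Inv (Sn n) := by
  intro n
  induction n with
  | zero => exact Inv_cube
  | succ n ih => rw [Sn_succ]; exact Inv_Fm ih

lemma Sn_anti : ∀ {m n : ℕ}, m ≤ n → Sn n ⊆ Sn m := by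
  have h1 : ∀ n, Sn (n+1) ⊆ Sn n := by
    intro n
    induction n with
    | zero => exact (Inv_Sn 1).2.2.1
    | succ n ih =>
        have h2 := Fm_mono ih
        rw [← Sn_succ (n+1), ← Sn_succ n] at h2
        exact h2
  intro m n h
  induction h with
  | refl => exact subset_rfl
  | step h ih => exact (h1 _).trans ih

lemma g_dist (d u v : E3) : dist (g d u) (g d v) = 3⁻¹ * dist u v := by
  rw [dist_eq_norm, dist_eq_norm]
  have : g d u - g d v = (3⁻¹:ℝ) • (u - v) := by
    simp only [g, smul_add, smul_sub]
    abel
  rw [this, norm_smul]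
  norm_num

section Inter
variable (hne : K.Nonempty) (hcomp : IsCompact K) (hfc : (3:ℝ) • K = K + D7)
include hne hcomp hfc

lemma K_sub_Sn (hcube : K ⊆ cube) : ∀ n, K ⊆ Sn n := by
  intro n
  induction n with
  | zero => exact hcube
  | succ n ih =>
    rw [Sn_succ, ← Fm_K hfc]
    exact Fm_mono ih

lemma Sn_approx (hcube : K ⊆ cube) : ∀ n, ∀ x ∈ Sn n, ∃ k ∈ K, dist x k ≤ 4 / 3^n := by
  intro n
  induction n with
  | zero =>
    intro x hx
    obtain ⟨k, hk⟩ := hne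
    refine ⟨k, hk, ?_⟩
    rw [dist_eq_norm]
    calc ‖x - k‖ ≤ ‖x‖ + ‖k‖ := norm_sub_le _ _
    _ ≤ 2 + 2 := add_le_add (cube_norm_le hx) (cube_norm_le (hcube hk))
    _ ≤ 4 / 3^0 := by norm_num
  | succ n ih =>
    intro x hx
    rw [Sn_succ] at hx
    obtain ⟨y, hy, d, hd, rfl⟩ := hx
    obtain ⟨k, hk, hdk⟩ := ih y hy
    refine ⟨g d k, ?_, ?_⟩
    · rw [← Fm_K hfc]
      exact ⟨k, hk, d, hd, rfl⟩
    · have : dist ((3⁻¹:ℝ) • (y + d)) (g d k) = 3⁻¹ * dist y k := g_dist d y k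
      rw [this]
      rw [pow_succ]
      rw [div_mul_eq_div_div]
      linarith [hdk]

end Inter

section Inter2
variable (hne : K.Nonempty) (hcomp : IsCompact K) (hfc : (3:ℝ) • K = K + D7)
  (hcube : K ⊆ cube)
include hne hcomp hfc hcube

lemma K_eq_iInter : K = ⋂ n, Sn n := by
  apply Subset.antisymm
  · exact subset_iInter fun n => K_sub_Sn hne hcomp hfc hcube n
  · intro x hx
    rw [← hcomp.isClosed.closure_eq]
    rw [Metric.mem_closure_iff]
    intro ε hε
    obtain ⟨n, hn⟩ := pow_unbounded_of_one_lt (4 / ε) (by norm_num : (1:ℝ) < 3)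
    obtain ⟨k, hk, hdk⟩ := Sn_approx hne hcomp hfc hcube n x (mem_iInter.mp hx n)
    refine ⟨k, hk, lt_of_le_of_lt hdk ?_⟩
    rw [div_lt_iff₀ (by positivity)]
    rw [div_lt_iff₀ hε] at hn
    linarith

lemma K_preconnected : IsPreconnected K := by
  intro U V hU hV hKUV hKU hKV
  by_contra hempty
  have hUV : K ∩ (U ∩ V) = ∅ := Set.not_nonempty_iff_eq_empty.mp hempty
  set A := K \ V with hA
  set B := K \ U with hB
  have hAcp : IsCompact A := hcomp.diff hV
  have hBcp : IsCompact B := hcomp.diff hU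
  have hABd : Disjoint A B := by
    rw [Set.disjoint_iff_inter_eq_empty]
    ext x
    simp only [hA, hB, mem_inter_iff, mem_diff, mem_empty_iff_false, iff_false]
    rintro ⟨⟨hxK, hxV⟩, -, hxU⟩
    rcases hKUV hxK with h|h
    · exact hxU h
    · exact hxV h
  obtain ⟨U', V', hU'o, hV'o, hAU', hBV', hd⟩ :=
    SeparatedNhds.of_isCompact_isCompact hAcp hBcp hABd
  have hKAB : K ⊆ A ∪ B := by
    intro x hx
    by_cases hxV : x ∈ V
    · right
      refine ⟨hx, fun hxU => ?_⟩
      have : x ∈ K ∩ (U ∩ V) := ⟨hx, hxU, hxV⟩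
      rw [hUV] at this
      exact this
    · exact Or.inl ⟨hx, hxV⟩
  have hsub : ∀ x ∈ ⋂ n, Sn n, U' ∪ V' ∈ nhds x := by
    intro x hx
    rw [← K_eq_iInter hne hcomp hfc hcube] at hx
    apply (hU'o.union hV'o).mem_nhds
    rcases hKAB hx with h|h
    · exact Or.inl (hAU' h)
    · exact Or.inr (hBV' h)
  obtain ⟨n, hn⟩ := exists_subset_nhds_of_isCompact'
    (fun m n => ⟨max m n, Sn_anti (le_max_left m n), Sn_anti (le_max_right m n)⟩)
    (fun n => (Inv_Sn n).1) (fun n => (Inv_Sn n).1.isClosed) hsub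
  have hAne : A.Nonempty := by
    obtain ⟨x, hxK, hxU⟩ := hKU
    refine ⟨x, hxK, fun hxV => ?_⟩
    have : x ∈ K ∩ (U ∩ V) := ⟨hxK, hxU, hxV⟩
    rw [hUV] at this
    exact this
  have hBne : B.Nonempty := by
    obtain ⟨x, hxK, hxV⟩ := hKV
    refine ⟨x, hxK, fun hxU => ?_⟩
    have : x ∈ K ∩ (U ∩ V) := ⟨hxK, hxU, hxV⟩
    rw [hUV] at this
    exact this
  have hc := (Inv_Sn n).2.1 U' V' hU'o hV'o hn
    (hAne.mono fun x hx => ⟨K_sub_Sn hne hcomp hfc hcube n hx.1, hAU' hx⟩)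
    (hBne.mono fun x hx => ⟨K_sub_Sn hne hcomp hfc hcube n hx.1, hBV' hx⟩)
  obtain ⟨z, -, hz⟩ := hc
  exact (hd.ne_of_mem hz.1 hz.2) rfl

end Inter2

/-- Level-`n` pieces of `K`. -/
def Pieces (K : Set E3) : ℕ → Set (Set E3)
  | 0 => {K}
  | (n+1) => {B | ∃ A ∈ Pieces K n, ∃ d ∈ D7, B = g d '' A}

lemma D7_finite : D7.Finite := by
  unfold D7
  exact Set.toFinite _

lemma Pieces_finite : ∀ n, (Pieces K n).Finite := by
  intro n
  induction n with
  | zero => exact Set.finite_singleton _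
  | succ n ih =>
    have : Pieces K (n+1) = Set.image2 (fun d A => g d '' A) D7 (Pieces K n) := by
      ext B
      simp only [Pieces, mem_setOf_eq, Set.mem_image2]
      tauto
    rw [this]
    exact Set.Finite.image2 _ D7_finite ih

lemma Pieces_subK (hfc : (3:ℝ) • K = K + D7) : ∀ n, ∀ A ∈ Pieces K n, A ⊆ K := by
  intro n
  induction n with
  | zero => rintro A rfl; exact subset_rfl
  | succ n ih =>
    rintro B ⟨A, hA, d, hd, rfl⟩
    rintro x ⟨y, hy, rfl⟩
    rw [← Fm_K hfc]
    exact ⟨y, ih A hA hy, d, hd, rfl⟩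

lemma Pieces_preconn (hKc : IsPreconnected K) : ∀ n, ∀ A ∈ Pieces K n, IsPreconnected A := by
  intro n
  induction n with
  | zero => rintro A rfl; exact hKc
  | succ n ih =>
    rintro B ⟨A, hA, d, hd, rfl⟩
    exact (ih A hA).image (g d) (g_cont d).continuousOn

lemma Pieces_cover (hfc : (3:ℝ) • K = K + D7) : ∀ n, ∀ x ∈ K, ∃ A ∈ Pieces K n, x ∈ A := by
  intro n
  induction n with
  | zero => exact fun x hx => ⟨K, rfl, hx⟩
  | succ n ih =>
    intro x hx
    rw [← Fm_K hfc] at hx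
    obtain ⟨y, hy, d, hd, rfl⟩ := hx
    obtain ⟨A, hA, hyA⟩ := ih y hy
    exact ⟨g d '' A, ⟨A, hA, d, hd, rfl⟩, ⟨y, hyA, rfl⟩⟩

lemma Pieces_diam (hcube : K ⊆ cube) :
    ∀ n, ∀ A ∈ Pieces K n, ∀ x ∈ A, ∀ y ∈ A, dist x y ≤ 4 / 3^n := by
  intro n
  induction n with
  | zero =>
    rintro A rfl x hx y hy
    rw [dist_eq_norm]
    calc ‖x - y‖ ≤ ‖x‖ + ‖y‖ := norm_sub_le _ _
    _ ≤ 2 + 2 := add_le_add (cube_norm_le (hcube hx)) (cube_norm_le (hcube hy))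
    _ ≤ 4 / 3^0 := by norm_num
  | succ n ih =>
    rintro B ⟨A, hA, d, hd, rfl⟩ x ⟨u, hu, rfl⟩ y ⟨v, hv, rfl⟩
    rw [g_dist]
    have := ih A hA u hu v hv
    rw [pow_succ, div_mul_eq_div_div]
    linarith

lemma K_locconn (hne : K.Nonempty) (hcomp : IsCompact K) (hfc : (3:ℝ) • K = K + D7)
    (hcube : K ⊆ cube) (hKc : IsPreconnected K) : LocallyConnectedSpace K := by
  rw [locallyConnectedSpace_iff_connected_subsets]
  intro x U hU
  rw [mem_nhds_subtype] at hU
  obtain ⟨t, ht, htU⟩ := hU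
  obtain ⟨ε, hε, hball⟩ := Metric.mem_nhds_iff.mp ht
  obtain ⟨n, hn⟩ := pow_unbounded_of_one_lt (4 / ε) (by norm_num : (1:ℝ) < 3)
  have hdiam : 4 / 3^n < ε := by
    rw [div_lt_iff₀ (by positivity : (0:ℝ) < 3^n)]
    rw [div_lt_iff₀ hε] at hn
    linarith
  set Fam : Set (Set E3) := {A ∈ Pieces K n | (x : E3) ∈ A} with hFam
  set N : Set E3 := ⋃₀ Fam with hN
  set M : Set E3 := ⋃ A ∈ {A ∈ Pieces K n | (x : E3) ∉ A}, A with hM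
  have hMclosed : IsClosed M := by
    apply Set.Finite.isClosed_biUnion ((Pieces_finite n).subset (fun A hA => hA.1))
    intro A hA
    -- pieces are compact
    have : ∀ m, ∀ A ∈ Pieces K m, IsCompact A := by
      intro m
      induction m with
      | zero => rintro A rfl; exact hcomp
      | succ m ih =>
        rintro B ⟨A', hA', d, hd, rfl⟩
        exact (ih A' hA').image (g_cont d)
    exact (this n A hA.1).isClosed
  have hxM : (x : E3) ∉ M := by
    simp only [hM, mem_iUnion]
    rintro ⟨A, ⟨-, hxA⟩, hxA'⟩
    exact hxA hxA'
  have hNK : N ⊆ K := by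
    rintro y ⟨A, hA, hyA⟩
    exact Pieces_subK hfc n A hA.1 hyA
  refine ⟨Subtype.val ⁻¹' N, ?_, ?_, ?_⟩
  · -- neighborhood
    rw [mem_nhds_subtype]
    refine ⟨Mᶜ, hMclosed.isOpen_compl.mem_nhds hxM, ?_⟩
    rintro ⟨y, hyK⟩ hyM
    obtain ⟨A, hA, hyA⟩ := Pieces_cover hfc n y hyK
    by_cases hxA : (x : E3) ∈ A
    · exact ⟨A, ⟨hA, hxA⟩, hyA⟩
    · have hmem : A ∈ {A ∈ Pieces K n | (x : E3) ∉ A} := ⟨hA, hxA⟩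
      exact absurd (mem_biUnion hmem hyA) hyM
  · -- preconnected
    have him : Subtype.val '' (Subtype.val ⁻¹' N : Set K) = N := by
      rw [Subtype.image_preimage_coe]
      exact inter_eq_self_of_subset_right hNK
    rw [← Topology.IsInducing.subtypeVal.isPreconnected_image, him]
    apply isPreconnected_sUnion (x : E3)
    · exact fun A hA => hA.2
    · exact fun A hA => Pieces_preconn hKc n A hA.1
  · -- inside U
    intro y hy
    apply htU
    obtain ⟨A, hA, hyA⟩ := hy
    have : dist (y : E3) (x : E3) ≤ 4 / 3^n := Pieces_diam hcube n A hA.1 _ hyA _ hA.2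
    exact hball (by rw [Metric.mem_ball]; exact lt_of_le_of_lt this hdiam)

noncomputable abbrev S2 : Set (EuclideanSpace ℝ (Fin 2)) := Metric.sphere 0 1

lemma S2_preconnected : IsPreconnected S2 := by
  refine (isConnected_sphere ?_ 0 zero_le_one).isPreconnected
  have h : Module.finrank ℝ (EuclideanSpace ℝ (Fin 2)) = 2 := finrank_euclideanSpace_fin
  have h2 := Module.finrank_eq_rank ℝ (EuclideanSpace ℝ (Fin 2))
  rw [h] at h2
  rw [← h2]
  exact_mod_cast one_lt_two

lemma S2_compl_preconnected (v : ↥S2) : IsPreconnected ({v}ᶜ : Set ↥S2) := by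
  have hv : ‖(v : EuclideanSpace ℝ (Fin 2))‖ = 1 := norm_eq_of_mem_sphere v
  have h1 := (stereographic hv).symm_image_target_eq_source
  rw [stereographic_target, stereographic_source] at h1
  have h2 : IsPreconnected ((stereographic hv).symm '' Set.univ) := by
    apply IsPreconnected.image isPreconnected_univ
    have := (stereographic hv).continuousOn_symm
    rwa [stereographic_target] at this
  rw [h1] at h2
  exact h2

lemma good_of_circle {C : Set E3} (hCK : C ⊆ K) (φ : ↥C ≃ₜ ↥S2) : Good K C := by
  have hCuniv : ∀ (T : Set ↥C), IsPreconnected T → IsPreconnected (Subtype.val '' T) :=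
    fun T hT => hT.image _ continuous_subtype_val.continuousOn
  have hCpre : IsPreconnected C := by
    have : PreconnectedSpace ↥S2 := Subtype.preconnectedSpace S2_preconnected
    have hu : IsPreconnected (Set.univ : Set ↥C) := by
      rw [← Set.image_univ_of_surjective φ.symm.surjective]
      exact isPreconnected_univ.image _ φ.symm.continuous.continuousOn
    have := hCuniv _ hu
    rwa [Set.image_univ, Subtype.range_coe] at this
  refine ⟨hCK, hCpre, ?_, ?_⟩
  · -- remove a point
    intro p
    by_cases hp : p ∈ C
    · set v : ↥S2 := φ ⟨p, hp⟩ with hv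
      have hpre := S2_compl_preconnected v
      have hA : IsPreconnected (φ.symm '' ({v}ᶜ : Set ↥S2)) :=
        hpre.image _ φ.symm.continuous.continuousOn
      have him : Subtype.val '' (φ.symm '' ({v}ᶜ : Set ↥S2)) = C \ {p} := by
        ext z
        constructor
        · rintro ⟨w, ⟨u, hu, rfl⟩, rfl⟩
          refine ⟨(φ.symm u).2, ?_⟩
          simp only [Set.mem_singleton_iff]
          intro hz
          apply hu
          rw [Set.mem_singleton_iff]
          have hz2 : φ.symm u = ⟨p, hp⟩ := Subtype.ext hz
          rw [hv, ← hz2, Homeomorph.apply_symm_apply]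
        · rintro ⟨hzC, hzp⟩
          refine ⟨φ.symm (φ ⟨z, hzC⟩), ⟨φ ⟨z, hzC⟩, ?_, rfl⟩, by simp⟩
          simp only [Set.mem_compl_iff, Set.mem_singleton_iff, hv]
          intro h
          have := φ.injective h
          apply hzp
          simpa using congrArg Subtype.val this
      rw [← him]
      exact hCuniv _ hA
    · have : C \ {p} = C := by
        ext z
        simp only [Set.mem_diff, Set.mem_singleton_iff, and_iff_left_iff_imp]
        rintro hz rfl
        exact hp hz
      rw [this]
      exact hCpre
  · -- two distinct points
    have he : EuclideanSpace.single (0 : Fin 2) (1:ℝ) ∈ S2 := by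
      rw [mem_sphere_zero_iff_norm, EuclideanSpace.norm_single]
      norm_num
    have hne : -EuclideanSpace.single (0 : Fin 2) (1:ℝ) ∈ S2 := by
      rw [mem_sphere_zero_iff_norm, norm_neg, EuclideanSpace.norm_single]
      norm_num
    set u : ↥S2 := ⟨_, he⟩ with hu
    set w : ↥S2 := ⟨_, hne⟩ with hw
    have huw : u ≠ w := by
      intro h
      have h2 := congrArg Subtype.val h
      have h3 := congrArg (fun z : EuclideanSpace ℝ (Fin 2) => z 0) h2
      simp only [hu, hw] at h3
      have h4 : (1:ℝ) = -1 := by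
        simpa [EuclideanSpace.single_apply,
          show ∀ x : EuclideanSpace ℝ (Fin 2), ∀ j, (-x) j = -(x j) from fun _ _ => rfl] using h3
      norm_num at h4
    refine ⟨φ.symm u, (φ.symm u).2, φ.symm w, (φ.symm w).2, ?_⟩
    intro h
    exact huw (φ.symm.injective (Subtype.ext h))

end FD

/-- The fractal 3-cube of order 3 with digit set
`D = {(0,0,2), (1,0,0), (1,0,1), (1,0,2), (1,1,1), (1,2,1), (2,0,2)}` is a dendrite. -/
theorem fractal_cube_1125892_is_dendrite
    (K : Set E3) (hne : K.Nonempty) (hcomp : IsCompact K)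
    (hfc : (3 : ℝ) • K = K + ({v3 0 0 2, v3 1 0 0, v3 1 0 1, v3 1 0 2,
      v3 1 1 1, v3 1 2 1, v3 2 0 2} : Set E3)) :
    IsDendrite K := by
  have hfc' : (3:ℝ) • K = K + FD.D7 := hfc
  have hcube := FD.K_subset_cube hne hcomp hfc'
  have hKpre := FD.K_preconnected hne hcomp hfc' hcube
  refine ⟨hcomp, ⟨hne, hKpre⟩, FD.K_locconn hne hcomp hfc' hcube hKpre, ?_⟩
  rintro ⟨C, hCK, ⟨φ⟩⟩
  exact FD.no_good hcomp hcube hfc' C (FD.good_of_circle hCK φ)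
end
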